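/- arXiv:2310.13313 — 6 statements merged into one kernel-verified Lean document; each statement's English description precedes it below -/
import Mathlib

section
/- For every bounded interval [a,b] and every continuous function w on [a,b], there exists a unique polynomial p of degree ≤ k such that ∫_a^b p(x) v(x) dx = ∫_a^b w(x) v(x) dx for all polynomials v of degree ≤ k-1 and p(b) = w(b); likewise there exists a unique polynomial p of degree ≤ k satisfying the same integral conditions together with p(a) = w(a). -/
/-!
The map `p ↦ ((v ↦ ∫_a^b p v), p(c))` from polynomials of degree `≤ n + 1` to the dual of the
polynomials of degree `≤ n`, times `ℝ`, goes between spaces of the same dimension `n + 2`, so it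
suffices that it is injective. If `p` is orthogonal to all polynomials of degree `≤ n` and
`p(c) = 0` then `p = (X - c) q` with `deg q ≤ n`, hence `∫_a^b (t - c) q(t)² dt = 0`; for `c` an
endpoint the weight `t - c` has constant sign on `(a, b)`, which forces `q = 0`.
-/

open Polynomial MeasureTheory intervalIntegral Set

theorem Polynomial.eq_zero_of_intervalIntegral_eq_zero_of_nonneg {g : ℝ[X]} {a b : ℝ}
    (hab : a < b) (hg : ∀ t ∈ Ioc a b, 0 ≤ g.eval t) (h : ∫ t in a..b, g.eval t = 0) :
    g = 0 := by
  have hzero : g.eval =ᵐ[volume.restrict (Ioc a b)] 0 :=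
    (integral_eq_zero_iff_of_le_of_nonneg_ae hab.le
      ((ae_restrict_iff' measurableSet_Ioc).2 (.of_forall hg))
      (g.continuous.intervalIntegrable a b)).1 h
  by_contra hg0
  have hroots : ∀ᵐ t ∂volume.restrict (Ioc a b), t ∉ {t | g.IsRoot t} :=
    ae_restrict_of_ae <|
      measure_eq_zero_iff_ae_notMem.1 ((finite_setOfPred_isRoot hg0).measure_zero _)
  have : (ae (volume.restrict (Ioc a b))).NeBot := ae_restrict_neBot.2 (by simp [hab])
  obtain ⟨t, ht, hnot⟩ := (hzero.and hroots).exists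
  exact hnot ht

namespace GaussRadau

noncomputable def l2Pairing (a b : ℝ) : ℝ[X] →ₗ[ℝ] ℝ[X] →ₗ[ℝ] ℝ :=
  LinearMap.mk₂ ℝ (fun p v => ∫ t in a..b, p.eval t * v.eval t)
    (fun p q v => by
      simp only [eval_add, add_mul]
      exact integral_add ((p.continuous.mul v.continuous).intervalIntegrable a b)
        ((q.continuous.mul v.continuous).intervalIntegrable a b))
    (fun r p v => by
      simp only [eval_smul, smul_eq_mul, mul_assoc, intervalIntegral.integral_const_mul])
    (fun p v w => by
      simp only [eval_add, mul_add]
      exact integral_add ((p.continuous.mul v.continuous).intervalIntegrable a b)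
        ((p.continuous.mul w.continuous).intervalIntegrable a b))
    (fun r p v => by
      simp only [eval_smul, smul_eq_mul, mul_left_comm, intervalIntegral.integral_const_mul])

theorem eq_zero_of_l2Pairing_eq_zero_of_isRoot {n : ℕ} {a b c : ℝ} (hab : a < b)
    (hc : c ∉ Ioo a b) {p : ℝ[X]} (hp : p ∈ degreeLE ℝ ↑(n + 1))
    (horth : ∀ v ∈ degreeLE ℝ n, l2Pairing a b p v = 0) (hroot : p.IsRoot c) : p = 0 := by
  set q := p /ₘ (X - C c)
  have hpq : (X - C c) * q = p := mul_divByMonic_eq_iff_isRoot.2 hroot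
  have hq : q ∈ degreeLE ℝ n := by
    have := natDegree_le_iff_degree_le.2 (mem_degreeLE.1 hp)
    rw [mem_degreeLE, ← natDegree_le_iff_degree_le, natDegree_divByMonic _ (monic_X_sub_C c),
      natDegree_X_sub_C]
    omega
  have hint : ∫ t in a..b, ((X - C c) * q ^ 2).eval t = 0 := by
    rw [← horth q hq, ← hpq]
    simp only [l2Pairing, LinearMap.mk₂_apply, eval_mul, eval_pow]
    ring_nf
  suffices (X - C c) * q ^ 2 = 0 by simpa [← hpq, X_sub_C_ne_zero] using this
  rcases le_or_gt c a with hca | hac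
  · refine eq_zero_of_intervalIntegral_eq_zero_of_nonneg hab (fun t ht => ?_) hint
    simp only [eval_mul, eval_sub, eval_X, eval_C, eval_pow]
    exact mul_nonneg (by linarith [ht.1]) (sq_nonneg _)
  · have hbc : b ≤ c := not_lt.1 fun hcb => hc ⟨hac, hcb⟩
    refine neg_eq_zero.1 (eq_zero_of_intervalIntegral_eq_zero_of_nonneg hab (fun t ht => ?_) ?_)
    · simp only [eval_mul, eval_neg, eval_sub, eval_X, eval_C, eval_pow]
      exact neg_nonneg.2 (mul_nonpos_of_nonpos_of_nonneg (by linarith [ht.2]) (sq_nonneg _))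
    · simp only [eval_neg, intervalIntegral.integral_neg, hint, neg_zero]

theorem finrank_degreeLE (n : ℕ) : Module.finrank ℝ (degreeLE ℝ n) = n + 1 := by
  rw [← degreeLT_succ_eq_degreeLE, (degreeLTEquiv ℝ (n + 1)).finrank_eq, Module.finrank_fin_fun]

instance (n : ℕ) : FiniteDimensional ℝ (degreeLE ℝ n) :=
  Module.finite_of_finrank_eq_succ (finrank_degreeLE n)

noncomputable def gaussRadauMap (a b c : ℝ) (n : ℕ) :
    degreeLE ℝ ↑(n + 1) →ₗ[ℝ] Module.Dual ℝ (degreeLE ℝ n) × ℝ :=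
  ((l2Pairing a b).compl₁₂ (Submodule.subtype _) (Submodule.subtype _)).prod
    ((leval c).comp (Submodule.subtype _))

theorem gaussRadauMap_bijective (n : ℕ) {a b c : ℝ} (hab : a < b) (hc : c ∉ Ioo a b) :
    Function.Bijective (gaussRadauMap a b c n) := by
  have hinj : Function.Injective (gaussRadauMap a b c n) := by
    rw [← LinearMap.ker_eq_bot, LinearMap.ker_eq_bot']
    rintro ⟨p, hp⟩ h
    rw [Prod.ext_iff] at h
    exact Subtype.ext (eq_zero_of_l2Pairing_eq_zero_of_isRoot hab hc hp
      (fun v hv => LinearMap.congr_fun h.1 ⟨v, hv⟩) h.2)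
  have hdim : Module.finrank ℝ (degreeLE ℝ ↑(n + 1)) =
      Module.finrank ℝ (Module.Dual ℝ (degreeLE ℝ n) × ℝ) := by
    rw [Module.finrank_prod, Subspace.dual_finrank_eq, finrank_degreeLE, finrank_degreeLE,
      Module.finrank_self]
  exact ⟨hinj, (LinearMap.injective_iff_surjective_of_finrank_eq_finrank hdim).1 hinj⟩

noncomputable def integralAgainst {a b : ℝ} {w : ℝ → ℝ} (hw : IntervalIntegrable w volume a b) :
    Module.Dual ℝ ℝ[X] where
  toFun v := ∫ t in a..b, w t * v.eval t
  map_add' u v := by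
    simp only [eval_add, mul_add]
    exact integral_add (hw.mul_continuousOn u.continuous.continuousOn)
      (hw.mul_continuousOn v.continuous.continuousOn)
  map_smul' r v := by
    simp only [eval_smul, smul_eq_mul, mul_left_comm, intervalIntegral.integral_const_mul,
      RingHom.id_apply]

theorem existsUnique_projection (n : ℕ) {a b c : ℝ} (hab : a < b) (hc : c ∉ Ioo a b)
    {w : ℝ → ℝ} (hw : IntervalIntegrable w volume a b) :
    ∃! p : ℝ[X], p ∈ degreeLE ℝ ↑(n + 1) ∧
      (∀ v ∈ degreeLE ℝ n, ∫ t in a..b, p.eval t * v.eval t = ∫ t in a..b, w t * v.eval t) ∧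
      p.eval c = w c := by
  set target : Module.Dual ℝ (degreeLE ℝ n) × ℝ :=
    ((integralAgainst hw).comp (Submodule.subtype _), w c)
  have hmap_eq_iff : ∀ p (hp : p ∈ degreeLE ℝ ↑(n + 1)),
      gaussRadauMap a b c n ⟨p, hp⟩ = target ↔
        (∀ v ∈ degreeLE ℝ n, ∫ t in a..b, p.eval t * v.eval t = ∫ t in a..b, w t * v.eval t) ∧
        p.eval c = w c := by
    intro p hp
    simp [target, Prod.ext_iff, LinearMap.ext_iff, gaussRadauMap, l2Pairing, integralAgainst]
  obtain ⟨⟨p, hp⟩, hpt⟩ := (gaussRadauMap_bijective n hab hc).2 target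
  refine ⟨p, ⟨hp, (hmap_eq_iff p hp).1 hpt⟩, fun q ⟨hq, hqt⟩ => ?_⟩
  exact congrArg Subtype.val
    ((gaussRadauMap_bijective n hab hc).1 (((hmap_eq_iff q hq).2 hqt).trans hpt.symm))

end GaussRadau

theorem gauss_radau_exists_unique
    (k : ℕ) (hk : 1 ≤ k) (a b : ℝ) (hab : a < b)
    (w : ℝ → ℝ) (hw : ContinuousOn w (Set.Icc a b)) :
    (∃! p : Polynomial ℝ, p.degree ≤ (k : WithBot ℕ) ∧
      (∀ v : Polynomial ℝ, v.degree ≤ ((k - 1 : ℕ) : WithBot ℕ) →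
        ∫ t in a..b, p.eval t * v.eval t = ∫ t in a..b, w t * v.eval t) ∧
      p.eval b = w b) ∧
    (∃! p : Polynomial ℝ, p.degree ≤ (k : WithBot ℕ) ∧
      (∀ v : Polynomial ℝ, v.degree ≤ ((k - 1 : ℕ) : WithBot ℕ) →
        ∫ t in a..b, p.eval t * v.eval t = ∫ t in a..b, w t * v.eval t) ∧
      p.eval a = w a) := by
  obtain ⟨n, rfl⟩ : ∃ n, k = n + 1 := ⟨k - 1, by omega⟩
  have hwi : IntervalIntegrable w volume a b := hw.intervalIntegrable_of_Icc hab.le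
  simp only [Nat.add_sub_cancel, ← mem_degreeLE]
  exact ⟨GaussRadau.existsUnique_projection n hab (by simp) hwi,
    GaussRadau.existsUnique_projection n hab (by simp) hwi⟩
end

section
/- There exists a constant C > 0 depending only on k (in particular independent of the interval and of w) such that for every bounded interval I = (a,b) of length h and every w ∈ H¹(I) (identified with its continuous representative): ‖π⁻ w‖_{L²(I)} ≤ C(‖w‖_{L²(I)} + h^{1/2}|w(b)|) and ‖π⁺ w‖_{L²(I)} ≤ C(‖w‖_{L²(I)} + h^{1/2}|w(a)|). -/
/-!
Rescaling `[a, b]` onto `[0, 1]` multiplies every `L²` norm by `√(b - a)`, so it suffices to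
prove the bound on the unit interval. There, let `q` be the `L²`-projection of `p` onto the
polynomials of degree `< k`. The moment conditions give `‖q‖² = ∫ w q ≤ (‖w‖² + ‖q‖²) / 2`,
hence `‖q‖ ≤ ‖w‖`. For an endpoint `c`, the linear map `p ↦ (q, p(c))` is injective on
polynomials of degree `≤ k`: if `q = 0` and `p(c) = 0`, then `p = (X - c) S` with `deg S < k` and
`0 = ∫ S p = ∫ (t - c) S(t)² dt`, an integrand of fixed sign. An injective linear map on a
finite-dimensional space is bounded below, so `‖p‖ ≤ K (‖q‖ + |p(c)|) ≤ K (‖w‖ + |w(c)|)`.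
-/

open Polynomial MeasureTheory Set intervalIntegral

theorem Polynomial.eq_zero_of_nonneg_of_integral_eq_zero {P : ℝ[X]} {a b : ℝ} (hab : a < b)
    (hP : ∀ x ∈ Icc a b, 0 ≤ P.eval x) (h : ∫ x in a..b, P.eval x = 0) : P = 0 := by
  by_contra hP0
  obtain ⟨x, hx, hPx⟩ := (Icc_infinite hab).exists_notMem_finite (finite_setOfPred_isRoot hP0)
  exact (integral_pos hab P.continuous.continuousOn (fun t ht => hP t (Ioc_subset_Icc_self ht))
    ⟨x, hx, (hP x hx).lt_of_ne' hPx⟩).ne' h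

theorem Polynomial.comp_mem_degreeLT {R : Type*} [Semiring R] {n : ℕ} {p q : R[X]}
    (hp : p ∈ degreeLT R n) (hq : q.natDegree ≤ 1) : p.comp q ∈ degreeLT R n := by
  rcases eq_or_ne p 0 with rfl | hp0
  · simp
  rw [mem_degreeLT, degree_eq_natDegree hp0, Nat.cast_lt] at hp
  rw [mem_degreeLT]
  calc (p.comp q).degree ≤ (p.comp q).natDegree := degree_le_natDegree
    _ ≤ p.natDegree := by
      exact_mod_cast natDegree_comp_le.trans (by simpa using Nat.mul_le_mul_left p.natDegree hq)
    _ < n := by exact_mod_cast hp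

theorem Polynomial.degree_le_pred_of_mem_degreeLT {R : Type*} [Semiring R] {k : ℕ} {v : R[X]}
    (hv : v ∈ degreeLT R k) : v.degree ≤ ((k - 1 : ℕ) : WithBot ℕ) := by
  rcases k with _ | k
  · simp_all [mem_degreeLT]
  · rwa [Nat.add_sub_cancel, ← mem_degreeLE, ← degreeLT_succ_eq_degreeLE]

theorem intervalIntegral.two_mul_integral_mul_le_integral_sq_add {f g : ℝ → ℝ} {a b : ℝ}
    (hab : a ≤ b) (hf : IntervalIntegrable (fun t => f t ^ 2) volume a b)
    (hg : IntervalIntegrable (fun t => g t ^ 2) volume a b) :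
    2 * ∫ t in a..b, f t * g t ≤ (∫ t in a..b, f t ^ 2) + ∫ t in a..b, g t ^ 2 := by
  have hf0 : 0 ≤ ∫ t in a..b, f t ^ 2 := integral_nonneg hab fun t _ => sq_nonneg _
  have hg0 : 0 ≤ ∫ t in a..b, g t ^ 2 := integral_nonneg hab fun t _ => sq_nonneg _
  by_cases hfg : IntervalIntegrable (fun t => f t * g t) volume a b
  · rw [← intervalIntegral.integral_const_mul, ← integral_add hf hg]
    exact integral_mono_on hab (hfg.const_mul 2) (hf.add hg)
      fun t _ => by linarith [two_mul_le_add_sq (f t) (g t)]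
  · rw [integral_undef hfg]
    linarith

theorem intervalIntegral.integral_eq_mul_integral_unitInterval (Φ : ℝ → ℝ) (a b : ℝ) :
    ∫ t in a..b, Φ t = (b - a) * ∫ s in (0:ℝ)..1, Φ ((b - a) * s + a) := by
  rw [← smul_eq_mul, smul_integral_comp_mul_add]
  simp

theorem continuousOn_of_eq_add_primitive {w g : ℝ → ℝ} {a b : ℝ} (hab : a ≤ b)
    (hg : IntervalIntegrable g volume a b) (hw : ∀ t ∈ Icc a b, w t = w a + ∫ s in a..t, g s) :
    ContinuousOn w (Icc a b) := by
  have h := continuousOn_primitive_interval' hg left_mem_uIcc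
  rw [uIcc_of_le hab] at h
  exact (continuousOn_const.add h).congr hw

def MomentsAgree (k : ℕ) (a b : ℝ) (u f : ℝ → ℝ) : Prop :=
  ∀ v ∈ degreeLT ℝ k, ∫ t in a..b, u t * v.eval t = ∫ t in a..b, f t * v.eval t

theorem MomentsAgree.comp_affine {k : ℕ} {a b : ℝ} (hab : a < b) {u f : ℝ → ℝ}
    (h : MomentsAgree k a b u f) :
    MomentsAgree k 0 1 (fun s => u ((b - a) * s + a)) (fun s => f ((b - a) * s + a)) := by
  intro v hv
  have hba : b - a ≠ 0 := sub_ne_zero.2 hab.ne'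
  set v' := v.comp (C (b - a)⁻¹ * (X - C a))
  have hv' : v' ∈ degreeLT ℝ k :=
    comp_mem_degreeLT hv ((natDegree_C_mul_le _ _).trans (natDegree_X_sub_C a).le)
  have hv'eval (s : ℝ) : v'.eval ((b - a) * s + a) = v.eval s := by
    simp only [v', eval_comp, eval_mul, eval_C, eval_sub, eval_X, add_sub_cancel_right]
    field_simp
  have h' := h v' hv'
  simp only [integral_eq_mul_integral_unitInterval (fun t => _ * v'.eval t) a b, hv'eval] at h'
  exact mul_left_cancel₀ hba h'

namespace Polynomial

@[reducible] noncomputable def unitL2Core : InnerProductSpace.Core ℝ ℝ[X] where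
  inner p q := ∫ t in (0:ℝ)..1, p.eval t * q.eval t
  conj_inner_symm p q := by simp only [conj_trivial, mul_comm]
  re_inner_nonneg p := integral_nonneg zero_le_one fun t _ => mul_self_nonneg _
  add_left p q r := by
    simp only [eval_add, add_mul]
    exact integral_add ((p.continuous.mul r.continuous).intervalIntegrable ..)
      ((q.continuous.mul r.continuous).intervalIntegrable ..)
  smul_left p q r := by
    simp only [eval_smul, smul_eq_mul, mul_assoc, intervalIntegral.integral_const_mul, conj_trivial]
  definite p hp := by
    simpa using eq_zero_of_nonneg_of_integral_eq_zero (P := p * p) zero_lt_one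
      (fun t _ => by simpa using mul_self_nonneg (p.eval t)) (by simpa using hp)

@[reducible] noncomputable def unitL2NormedAddCommGroup : NormedAddCommGroup ℝ[X] :=
  unitL2Core.toNormedAddCommGroup

attribute [local instance] unitL2NormedAddCommGroup

@[reducible] noncomputable def unitL2InnerProductSpace : InnerProductSpace ℝ ℝ[X] :=
  InnerProductSpace.ofCore unitL2Core.toCore

attribute [local instance] unitL2InnerProductSpace

theorem unitL2_inner_def (p q : ℝ[X]) : inner ℝ p q = ∫ t in (0:ℝ)..1, p.eval t * q.eval t := rfl

theorem unitL2_norm_sq (p : ℝ[X]) : ‖p‖ ^ 2 = ∫ t in (0:ℝ)..1, p.eval t ^ 2 := by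
  rw [← real_inner_self_eq_norm_sq, unitL2_inner_def]
  simp only [sq]

theorem unitL2_norm_eq_sqrt (p : ℝ[X]) : ‖p‖ = √(∫ t in (0:ℝ)..1, p.eval t ^ 2) := by
  rw [← unitL2_norm_sq, Real.sqrt_sq (norm_nonneg p)]

theorem eq_zero_of_mem_orthogonal_of_isRoot {k : ℕ} {c : ℝ} (hc : c ∉ Ioo 0 1) {p : ℝ[X]}
    (hp : p ∈ degreeLT ℝ (k + 1)) (hort : p ∈ (degreeLT ℝ k)ᗮ) (hpc : p.IsRoot c) : p = 0 := by
  set S := p /ₘ (X - C c)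
  have hfac : (X - C c) * S = p := mul_divByMonic_eq_iff_isRoot.mpr hpc
  have hS : S ∈ degreeLT ℝ k := by
    rw [mem_degreeLT] at hp ⊢
    rw [← hfac, degree_mul, degree_X_sub_C, add_comm] at hp
    exact (WithBot.add_lt_add_iff_right (by simp)).1 hp
  have hSp : ∫ t in (0:ℝ)..1, S.eval t * p.eval t = 0 :=
    Submodule.inner_right_of_mem_orthogonal hS hort
  -- `(1/2 - c) * (t - c) ≥ 0` for `t ∈ [0, 1]` precisely because `c ∉ (0, 1)`
  have hm : C (1/2 - c) * (X - C c) * (S * S) = 0 := by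
    refine eq_zero_of_nonneg_of_integral_eq_zero zero_lt_one (fun t ht => ?_) ?_
    · have : 0 ≤ (1/2 - c) * (t - c) := by
        rcases not_and_or.1 hc with h | h <;> push Not at h <;> nlinarith [ht.1, ht.2]
      simpa [mul_assoc] using mul_nonneg this (mul_self_nonneg (S.eval t))
    · have heval (t : ℝ) : (C (1/2 - c) * (X - C c) * (S * S)).eval t
          = (1/2 - c) * (S.eval t * ((X - C c) * S).eval t) := by
        simp only [eval_mul, eval_sub, eval_C, eval_X]
        ring
      simp only [heval, intervalIntegral.integral_const_mul, hfac, hSp, mul_zero]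
  have hc2 : 1/2 - c ≠ 0 := fun h => hc ⟨by linarith, by linarith⟩
  rcases mul_eq_zero.1 hm with h | h
  · exact absurd h (mul_ne_zero (C_ne_zero.2 hc2) (X_sub_C_ne_zero c))
  · rw [← hfac, mul_self_eq_zero.1 h, mul_zero]

theorem exists_norm_le_norm_starProjection_add_abs_eval (k : ℕ) {c : ℝ} (hc : c ∉ Ioo 0 1) :
    ∃ K > 0, ∀ p ∈ degreeLT ℝ (k + 1),
      ‖p‖ ≤ K * (‖(degreeLT ℝ k).starProjection p‖ + |p.eval c|) := by
  let T : degreeLT ℝ (k + 1) →ₗ[ℝ] ℝ[X] × ℝ :=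
    LinearMap.prod ((degreeLT ℝ k).starProjection.toLinearMap ∘ₗ (degreeLT ℝ (k + 1)).subtype)
      (leval c ∘ₗ (degreeLT ℝ (k + 1)).subtype)
  have hT : LinearMap.ker T = ⊥ := by
    refine LinearMap.ker_eq_bot'.2 fun p hp => Subtype.ext ?_
    simp only [T, LinearMap.prod_apply, Function.prod, Prod.mk_eq_zero] at hp
    exact eq_zero_of_mem_orthogonal_of_isRoot hc p.2
      ((Submodule.starProjection_apply_eq_zero_iff _).1 hp.1) hp.2
  obtain ⟨K, hK, hKT⟩ := T.exists_antilipschitzWith hT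
  refine ⟨K, hK, fun p hp => ?_⟩
  calc ‖p‖ = ‖(⟨p, hp⟩ : degreeLT ℝ (k + 1))‖ := rfl
    _ ≤ K * ‖T ⟨p, hp⟩‖ := hKT.le_mul_norm (map_zero T) _
    _ ≤ K * (‖(degreeLT ℝ k).starProjection p‖ + |p.eval c|) := by
      gcongr
      exact max_le_add_of_nonneg (norm_nonneg _) (norm_nonneg _)

theorem norm_starProjection_le_of_momentsAgree {k : ℕ} {f : ℝ → ℝ}
    (hf : IntervalIntegrable (fun t => f t ^ 2) volume 0 1) {p : ℝ[X]}
    (hmom : MomentsAgree k 0 1 p.eval f) :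
    ‖(degreeLT ℝ k).starProjection p‖ ≤ √(∫ t in (0:ℝ)..1, f t ^ 2) := by
  set q := (degreeLT ℝ k).starProjection p
  have hq : q ∈ degreeLT ℝ k := Submodule.starProjection_apply_mem _ p
  have hpq : inner ℝ p q = ‖q‖ ^ 2 := by
    rw [← real_inner_self_eq_norm_sq, ← sub_eq_zero, ← inner_sub_left]
    exact Submodule.starProjection_inner_eq_zero p q hq
  have hyoung := two_mul_integral_mul_le_integral_sq_add zero_le_one hf
    ((q.continuous.pow 2).intervalIntegrable 0 1)
  rw [← hmom q hq, ← unitL2_inner_def, hpq, ← unitL2_norm_sq] at hyoung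
  exact Real.le_sqrt_of_sq_le (by linarith)

theorem exists_sqrt_integral_sq_le_unitInterval (k : ℕ) {c : ℝ} (hc : c ∉ Ioo 0 1) :
    ∃ M > 0, ∀ f : ℝ → ℝ, IntervalIntegrable (fun t => f t ^ 2) volume 0 1 →
      ∀ p ∈ degreeLT ℝ (k + 1), MomentsAgree k 0 1 p.eval f → p.eval c = f c →
        √(∫ t in (0:ℝ)..1, p.eval t ^ 2) ≤ M * (√(∫ t in (0:ℝ)..1, f t ^ 2) + |f c|) := by
  obtain ⟨M, hM, hbound⟩ := exists_norm_le_norm_starProjection_add_abs_eval k hc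
  refine ⟨M, hM, fun f hf p hp hmom hpc => ?_⟩
  rw [← unitL2_norm_eq_sqrt, ← hpc]
  calc ‖p‖ ≤ M * (‖(degreeLT ℝ k).starProjection p‖ + |p.eval c|) := hbound p hp
    _ ≤ M * (√(∫ t in (0:ℝ)..1, f t ^ 2) + |p.eval c|) := by
      gcongr
      exact norm_starProjection_le_of_momentsAgree hf hmom

end Polynomial

theorem exists_sqrt_integral_sq_le (k : ℕ) {c : ℝ} (hc : c ∉ Ioo 0 1) :
    ∃ M > 0, ∀ a b : ℝ, a < b → ∀ f : ℝ → ℝ, ContinuousOn f (Icc a b) →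
      ∀ p ∈ degreeLT ℝ (k + 1), MomentsAgree k a b p.eval f →
        p.eval ((b - a) * c + a) = f ((b - a) * c + a) →
        √(∫ t in a..b, p.eval t ^ 2) ≤
          M * (√(∫ t in a..b, f t ^ 2) + √(b - a) * |f ((b - a) * c + a)|) := by
  obtain ⟨M, hM, hunit⟩ := exists_sqrt_integral_sq_le_unitInterval k hc
  refine ⟨M, hM, fun a b hab f hf p hp hmom hpc => ?_⟩
  have hσ : MapsTo (fun s => (b - a) * s + a) (Icc 0 1) (Icc a b) := fun s hs =>
    ⟨by nlinarith [hs.1], by nlinarith [hs.2]⟩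
  have hsqrt (u : ℝ → ℝ) :
      √(∫ t in a..b, u t ^ 2) = √(b - a) * √(∫ s in (0:ℝ)..1, u ((b - a) * s + a) ^ 2) := by
    rw [integral_eq_mul_integral_unitInterval, Real.sqrt_mul (sub_nonneg.2 hab.le)]
  have hfσ : IntervalIntegrable (fun s => f ((b - a) * s + a) ^ 2) volume 0 1 :=
    ((hf.comp (by fun_prop) hσ).pow 2).intervalIntegrable_of_Icc zero_le_one
  have hevalσ : (p.comp (C (b - a) * X + C a)).eval = fun s => p.eval ((b - a) * s + a) := by
    ext
    simp
  have hunit' := hunit _ hfσ _ (comp_mem_degreeLT hp natDegree_linear_le)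
    (hevalσ ▸ hmom.comp_affine hab) (by simpa [hevalσ] using hpc)
  simp only [eval_comp, eval_add, eval_mul, eval_C, eval_X] at hunit'
  rw [hsqrt, hsqrt]
  calc √(b - a) * √(∫ s in (0:ℝ)..1, p.eval ((b - a) * s + a) ^ 2)
      ≤ √(b - a) * (M * (√(∫ s in (0:ℝ)..1, f ((b - a) * s + a) ^ 2) + |f ((b - a) * c + a)|)) :=
        mul_le_mul_of_nonneg_left hunit' (Real.sqrt_nonneg _)
    _ = _ := by ring

theorem gauss_radau_L2_stability_general
    (k : ℕ) :
    ∃ C : ℝ, 0 < C ∧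
      ∀ a b : ℝ, a < b → ∀ w g : ℝ → ℝ,
        IntervalIntegrable g MeasureTheory.volume a b →
        IntervalIntegrable (fun t => (g t) ^ 2) MeasureTheory.volume a b →
        (∀ t ∈ Set.Icc a b, w t = w a + ∫ s in a..t, g s) →
        ∀ p : Polynomial ℝ, p.degree ≤ (k : WithBot ℕ) →
          (∀ v : Polynomial ℝ, v.degree ≤ ((k - 1 : ℕ) : WithBot ℕ) →
            ∫ t in a..b, p.eval t * v.eval t = ∫ t in a..b, w t * v.eval t) →
          ((p.eval b = w b →
            Real.sqrt (∫ t in a..b, (p.eval t) ^ 2) ≤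
              C * (Real.sqrt (∫ t in a..b, (w t) ^ 2) +
                Real.sqrt (b - a) * |w b|)) ∧
           (p.eval a = w a →
            Real.sqrt (∫ t in a..b, (p.eval t) ^ 2) ≤
              C * (Real.sqrt (∫ t in a..b, (w t) ^ 2) +
                Real.sqrt (b - a) * |w a|))) := by
  obtain ⟨M₀, hM₀, h₀⟩ := exists_sqrt_integral_sq_le k (c := 0) (by simp)
  obtain ⟨M₁, -, h₁⟩ := exists_sqrt_integral_sq_le k (c := 1) (by simp)
  refine ⟨max M₀ M₁, lt_max_of_lt_left hM₀, fun a b hab w g hg _ hw p hpdeg horth => ?_⟩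
  have hwc := continuousOn_of_eq_add_primitive hab.le hg hw
  have hp : p ∈ degreeLT ℝ (k + 1) := by rwa [degreeLT_succ_eq_degreeLE, mem_degreeLE]
  have hmom : MomentsAgree k a b p.eval w := fun v hv => horth v (degree_le_pred_of_mem_degreeLT hv)
  refine ⟨fun hpb => ?_, fun hpa => ?_⟩
  · have h := h₁ a b hab w hwc p hp hmom (by simpa using hpb)
    simp only [mul_one, sub_add_cancel] at h
    exact h.trans (by gcongr; exact le_max_right _ _)
  · have h := h₀ a b hab w hwc p hp hmom (by simpa using hpa)
    simp only [mul_zero, zero_add] at h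
    exact h.trans (by gcongr; exact le_max_left _ _)

theorem gauss_radau_L2_stability
    (k : ℕ) (hk : 1 ≤ k) :
    ∃ C : ℝ, 0 < C ∧
      ∀ a b : ℝ, a < b → ∀ w g : ℝ → ℝ,
        IntervalIntegrable g MeasureTheory.volume a b →
        IntervalIntegrable (fun t => (g t) ^ 2) MeasureTheory.volume a b →
        (∀ t ∈ Set.Icc a b, w t = w a + ∫ s in a..t, g s) →
        ∀ p : Polynomial ℝ, p.degree ≤ (k : WithBot ℕ) →
          (∀ v : Polynomial ℝ, v.degree ≤ ((k - 1 : ℕ) : WithBot ℕ) →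
            ∫ t in a..b, p.eval t * v.eval t = ∫ t in a..b, w t * v.eval t) →
          ((p.eval b = w b →
            Real.sqrt (∫ t in a..b, (p.eval t) ^ 2) ≤
              C * (Real.sqrt (∫ t in a..b, (w t) ^ 2) +
                Real.sqrt (b - a) * |w b|)) ∧
           (p.eval a = w a →
            Real.sqrt (∫ t in a..b, (p.eval t) ^ 2) ≤
              C * (Real.sqrt (∫ t in a..b, (w t) ^ 2) +
                Real.sqrt (b - a) * |w a|))) :=
  gauss_radau_L2_stability_general k
end

section
/- There exists a constant C > 0 depending only on k, β and Γ (in particular independent of the interval and of w) such that for every bounded interval I = (a,b), every continuous weight b on [a,b] with β² ≤ b ≤ Γ, every R ∈ {π, π_b, π⁻, π⁺}, and every w continuous on [a,b]: ‖Rw‖_{L∞(I)} ≤ C ‖w‖_{L∞(I)}. -/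
/-!
On `[0, 1]` all norms on polynomials of degree `≤ k` are equivalent, so `q(u)² ≤ K ∫₀¹ q²`; an
affine change of variables turns this into the inverse estimate `(b - a) p(t)² ≤ K ∫ₐᵇ p²`, so it
suffices to bound `∫ₐᵇ p²` by a multiple of `(b - a) ‖w‖∞²`.

For the (weighted) L² projections, testing the defining identity with `p` itself gives
`β² ∫ p² ≤ ∫ b p² ≤ ∫ b w² ≤ Γ ∫ w²`.

For the Gauß–Radau projections write `p = s + c L`, where `L = dᵏ/dxᵏ [(x - a)ᵏ (x - b)ᵏ]`.
Integrating by parts `k` times, `L` is orthogonal to all polynomials of degree `< k` and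
`∫ L² ≤ (2k)! (b - a)^(2k+1)`, so `s` is the L² projection of `w` onto degree `< k` and
`|L| ≤ K' (b - a)ᵏ`, while `|L(a)| = |L(b)| = k! (b - a)ᵏ`. The endpoint condition
`c L(x₀) = w(x₀) - s(x₀)` then bounds `c` by a multiple of `‖w‖∞ / (b - a)ᵏ`.
-/

open Polynomial Set intervalIntegral
open scoped Nat

namespace ProjectionStability

theorem exists_pos_mul_norm_sq_le {E : Type*} [NormedAddCommGroup E] [NormedSpace ℝ E]
    [FiniteDimensional ℝ E] {Q : E → ℝ} (hQ : Continuous Q)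
    (hsmul : ∀ (t : ℝ) (x : E), Q (t • x) = t ^ 2 * Q x) (hpos : ∀ x, x ≠ 0 → 0 < Q x) :
    ∃ m > 0, ∀ x, m * ‖x‖ ^ 2 ≤ Q x := by
  have hQ0 : Q 0 = 0 := by simpa using hsmul 0 0
  rcases subsingleton_or_nontrivial E with _ | _
  · exact ⟨1, one_pos, fun x => by simp [Subsingleton.elim x 0, hQ0]⟩
  obtain ⟨x₀, hx₀, hmin⟩ := (isCompact_sphere (0 : E) 1).exists_isMinOn
    (NormedSpace.sphere_nonempty.mpr zero_le_one) hQ.continuousOn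
  refine ⟨Q x₀, hpos x₀ (ne_zero_of_mem_unit_sphere ⟨x₀, hx₀⟩), fun x => ?_⟩
  rcases eq_or_ne x 0 with rfl | hx
  · simp [hQ0]
  have hnx : ‖x‖ ≠ 0 := norm_ne_zero_iff.mpr hx
  have hunit : ‖x‖⁻¹ • x ∈ Metric.sphere (0 : E) 1 := by simp [norm_smul, hnx]
  calc Q x₀ * ‖x‖ ^ 2 ≤ Q (‖x‖⁻¹ • x) * ‖x‖ ^ 2 := by gcongr; exact hmin hunit
    _ = Q x := by rw [hsmul]; field_simp

theorem integral_eval_sq_pos {q : ℝ[X]} (hq : q ≠ 0) {a b : ℝ} (hab : a < b) :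
    0 < ∫ x in a..b, q.eval x ^ 2 := by
  obtain ⟨c, hc, hqc⟩ := (Icc_infinite hab).exists_notMem_finite (q.finite_setOfPred_isRoot hq)
  exact integral_pos hab (by fun_prop) (fun x _ => sq_nonneg _)
    ⟨c, hc, by have : q.eval c ≠ 0 := hqc; positivity⟩

theorem abs_sum_mul_pow_le {n : ℕ} (c : Fin n → ℝ) {u : ℝ} (hu : u ∈ Icc (0 : ℝ) 1) :
    |∑ i, c i * u ^ (i : ℕ)| ≤ n * ‖c‖ := by
  calc |∑ i, c i * u ^ (i : ℕ)| ≤ ∑ i, |c i| * |u| ^ (i : ℕ) := by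
        simpa only [abs_mul, abs_pow] using
          Finset.abs_sum_le_sum_abs (fun i : Fin n => c i * u ^ (i : ℕ)) Finset.univ
    _ ≤ ∑ _i : Fin n, ‖c‖ := by
        gcongr with i
        calc |c i| * |u| ^ (i : ℕ) ≤ ‖c‖ * 1 := by
              gcongr
              · exact norm_le_pi_norm c i
              · exact pow_le_one₀ (abs_nonneg u) (abs_le.mpr ⟨by linarith [hu.1], hu.2⟩)
          _ = ‖c‖ := mul_one _
    _ = n * ‖c‖ := by simp

theorem exists_sq_eval_le_mul_integral_sq_unitInterval (k : ℕ) :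
    ∃ K > 0, ∀ q : ℝ[X], q.degree ≤ k → ∀ u ∈ Icc (0 : ℝ) 1,
      q.eval u ^ 2 ≤ K * ∫ x in (0 : ℝ)..1, q.eval x ^ 2 := by
  let e := degreeLTEquiv ℝ (k + 1)
  let Q : (Fin (k + 1) → ℝ) → ℝ := fun c => ∫ x in (0 : ℝ)..1, (∑ i, c i * x ^ (i : ℕ)) ^ 2
  have heval : ∀ c x, (e.symm c : ℝ[X]).eval x = ∑ i, c i * x ^ (i : ℕ) := fun c x => by
    rw [eval_eq_sum_degreeLTEquiv (e.symm c).2]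
    simp [e]
  obtain ⟨m, hm, hmQ⟩ := exists_pos_mul_norm_sq_le (Q := Q)
    (continuous_parametric_intervalIntegral_of_continuous' (by fun_prop) 0 1)
    (fun t c => by
      simp only [Q, Pi.smul_apply, smul_eq_mul, mul_assoc, ← Finset.mul_sum, mul_pow,
        integral_const_mul])
    (fun c hc => by
      have hq : (e.symm c : ℝ[X]) ≠ 0 := by simpa using hc
      simpa only [Q, heval] using integral_eval_sq_pos hq zero_lt_one)
  refine ⟨(k + 1) ^ 2 / m, by positivity, fun q hq u hu => ?_⟩
  have hqmem : q ∈ degreeLT ℝ (k + 1) :=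
    mem_degreeLT.mpr (hq.trans_lt (by exact_mod_cast k.lt_succ_self))
  set c := e ⟨q, hqmem⟩
  have hqe : ∀ x, q.eval x = ∑ i, c i * x ^ (i : ℕ) := eval_eq_sum_degreeLTEquiv hqmem
  calc q.eval u ^ 2 ≤ ((k + 1) * ‖c‖) ^ 2 := by
        rw [← sq_abs, hqe]
        gcongr
        exact_mod_cast abs_sum_mul_pow_le c hu
    _ = (k + 1) ^ 2 / m * (m * ‖c‖ ^ 2) := by field_simp
    _ ≤ (k + 1) ^ 2 / m * Q c := by gcongr; exact hmQ c
    _ = (k + 1) ^ 2 / m * ∫ x in (0 : ℝ)..1, q.eval x ^ 2 := by simp only [Q, hqe]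

theorem exists_mul_sq_eval_le_mul_integral_sq (k : ℕ) :
    ∃ K > 0, ∀ a b : ℝ, a < b → ∀ p : ℝ[X], p.degree ≤ k → ∀ t ∈ Icc a b,
      (b - a) * p.eval t ^ 2 ≤ K * ∫ x in a..b, p.eval x ^ 2 := by
  obtain ⟨K, hK, hunit⟩ := exists_sq_eval_le_mul_integral_sq_unitInterval k
  refine ⟨K, hK, fun a b hab p hp t ht => ?_⟩
  have hba : 0 < b - a := sub_pos.mpr hab
  set q := p.comp (C (b - a) * X + C a)
  have hq_eval : ∀ u, q.eval u = p.eval ((b - a) * u + a) := fun u => by simp [q]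
  have hq_deg : q.degree ≤ k := by
    rw [← natDegree_le_iff_degree_le] at hp ⊢
    calc q.natDegree ≤ p.natDegree * 1 :=
          natDegree_comp_le.trans (by gcongr; exact natDegree_linear_le)
      _ ≤ k := by simpa using hp
  have hq_int : ∫ x in (0 : ℝ)..1, q.eval x ^ 2 = (b - a)⁻¹ * ∫ x in a..b, p.eval x ^ 2 := by
    simp only [hq_eval]
    rw [integral_comp_mul_add (fun x => p.eval x ^ 2) hba.ne']
    simp
  have hu : (t - a) / (b - a) ∈ Icc (0 : ℝ) 1 :=
    ⟨div_nonneg (by linarith [ht.1]) hba.le, (div_le_one hba).mpr (by linarith [ht.2])⟩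
  have hbound := hunit q hq_deg _ hu
  rw [hq_eval, hq_int, show (b - a) * ((t - a) / (b - a)) + a = t by field_simp; ring] at hbound
  calc (b - a) * p.eval t ^ 2 ≤ (b - a) * (K * ((b - a)⁻¹ * ∫ x in a..b, p.eval x ^ 2)) := by
        gcongr
    _ = K * ∫ x in a..b, p.eval x ^ 2 := by field_simp

theorem exists_abs_eval_le_of_integral_sq_le (k : ℕ) :
    ∃ K > 0, ∀ a b : ℝ, a < b → ∀ p : ℝ[X], p.degree ≤ k → ∀ N : ℝ, 0 ≤ N →
      ∫ x in a..b, p.eval x ^ 2 ≤ N ^ 2 * (b - a) → ∀ t ∈ Icc a b, |p.eval t| ≤ K * N := by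
  obtain ⟨K, hK, hinv⟩ := exists_mul_sq_eval_le_mul_integral_sq k
  refine ⟨√K, Real.sqrt_pos.mpr hK, fun a b hab p hp N hN hL2 t ht => ?_⟩
  have hba : 0 < b - a := sub_pos.mpr hab
  refine abs_le_of_sq_le_sq (le_of_mul_le_mul_left ?_ hba) (by positivity)
  calc (b - a) * p.eval t ^ 2 ≤ K * ∫ x in a..b, p.eval x ^ 2 := hinv a b hab p hp t ht
    _ ≤ K * (N ^ 2 * (b - a)) := by gcongr
    _ = (b - a) * (√K * N) ^ 2 := by rw [mul_pow, Real.sq_sqrt hK.le]; ring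

section SupNorm

variable {w : ℝ → ℝ} {a b : ℝ}

theorem abs_le_sSup_image_abs (hw : ContinuousOn w (Icc a b)) {s : ℝ} (hs : s ∈ Icc a b) :
    |w s| ≤ sSup ((fun s => |w s|) '' Icc a b) :=
  le_csSup (isCompact_Icc.image_of_continuousOn hw.abs).bddAbove ⟨s, hs, rfl⟩

theorem sSup_image_abs_nonneg (hab : a ≤ b) (hw : ContinuousOn w (Icc a b)) :
    0 ≤ sSup ((fun s => |w s|) '' Icc a b) :=
  (abs_nonneg _).trans (abs_le_sSup_image_abs hw (left_mem_Icc.mpr hab))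

theorem integral_sq_le_sSup_sq_mul (hab : a ≤ b) (hw : ContinuousOn w (Icc a b)) :
    ∫ x in a..b, w x ^ 2 ≤ sSup ((fun s => |w s|) '' Icc a b) ^ 2 * (b - a) := by
  calc ∫ x in a..b, w x ^ 2 ≤ ∫ _ in a..b, sSup ((fun s => |w s|) '' Icc a b) ^ 2 :=
        integral_mono_on hab ((hw.pow 2).intervalIntegrable_of_Icc hab) intervalIntegrable_const
          fun x hx => by rw [← sq_abs]; gcongr; exact abs_le_sSup_image_abs hw hx
    _ = _ := by simp [mul_comm]

end SupNorm

theorem integral_mul_sq_le_of_integral_mul_eq {a b : ℝ} (hab : a ≤ b) {ρ f g : ℝ → ℝ}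
    (hρ : ContinuousOn ρ (Icc a b)) (hρ0 : ∀ x ∈ Icc a b, 0 ≤ ρ x)
    (hf : ContinuousOn f (Icc a b)) (hg : ContinuousOn g (Icc a b))
    (hfg : ∫ x in a..b, ρ x * f x * f x = ∫ x in a..b, ρ x * g x * f x) :
    ∫ x in a..b, ρ x * f x ^ 2 ≤ ∫ x in a..b, ρ x * g x ^ 2 := by
  have hint : ∀ F : ℝ → ℝ, ContinuousOn F (Icc a b) →
      IntervalIntegrable F MeasureTheory.volume a b := fun F hF => hF.intervalIntegrable_of_Icc hab
  have hmono : ∫ x in a..b, ρ x * g x * f x ≤ ∫ x in a..b, (ρ x * f x ^ 2 + ρ x * g x ^ 2) / 2 :=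
    integral_mono_on hab (hint _ (by fun_prop)) (hint _ (by fun_prop)) fun x hx => by
      nlinarith [mul_nonneg (hρ0 x hx) (sq_nonneg (f x - g x))]
  rw [integral_div, integral_add (hint _ (by fun_prop)) (hint _ (by fun_prop)), ← hfg] at hmono
  simp only [mul_assoc, ← sq] at hmono
  linarith

theorem exists_abs_eval_le_of_integral_weight_mul_eq (k : ℕ) {β Γ : ℝ} (hβ : 0 < β)
    (hβΓ : β ^ 2 ≤ Γ) :
    ∃ K > 0, ∀ a b : ℝ, a < b → ∀ ρ : ℝ → ℝ, ContinuousOn ρ (Icc a b) →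
      (∀ t ∈ Icc a b, β ^ 2 ≤ ρ t ∧ ρ t ≤ Γ) → ∀ w : ℝ → ℝ, ContinuousOn w (Icc a b) →
      ∀ p : ℝ[X], p.degree ≤ k →
      ∫ x in a..b, ρ x * p.eval x * p.eval x = ∫ x in a..b, ρ x * w x * p.eval x →
      ∀ t ∈ Icc a b, |p.eval t| ≤ K * sSup ((fun s => |w s|) '' Icc a b) := by
  obtain ⟨K, hK, hsup⟩ := exists_abs_eval_le_of_integral_sq_le k
  have hΓ : 0 < Γ := (by positivity : 0 < β ^ 2).trans_le hβΓ
  refine ⟨K * (√Γ / β), by positivity, fun a b hab ρ hρ hρβΓ w hw p hp hproj t ht => ?_⟩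
  set M := sSup ((fun s => |w s|) '' Icc a b)
  have hint : ∀ F : ℝ → ℝ, ContinuousOn F (Icc a b) →
      IntervalIntegrable F MeasureTheory.volume a b :=
    fun F hF => hF.intervalIntegrable_of_Icc hab.le
  have hcoercive : β ^ 2 * ∫ x in a..b, p.eval x ^ 2 ≤ ∫ x in a..b, ρ x * p.eval x ^ 2 := by
    rw [← integral_const_mul]
    exact integral_mono_on hab.le (hint _ (by fun_prop)) (hint _ (by fun_prop)) fun x hx => by
      gcongr; exact (hρβΓ x hx).1
  have hgalerkin := integral_mul_sq_le_of_integral_mul_eq hab.le hρ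
    (fun x hx => (sq_nonneg β).trans (hρβΓ x hx).1) p.continuous.continuousOn hw hproj
  have hbounded : ∫ x in a..b, ρ x * w x ^ 2 ≤ Γ * ∫ x in a..b, w x ^ 2 := by
    rw [← integral_const_mul]
    exact integral_mono_on hab.le (hint _ (by fun_prop)) (hint _ (by fun_prop)) fun x hx => by
      gcongr; exact (hρβΓ x hx).2
  have hchain : β ^ 2 * ∫ x in a..b, p.eval x ^ 2 ≤ Γ * (M ^ 2 * (b - a)) :=
    calc β ^ 2 * ∫ x in a..b, p.eval x ^ 2 ≤ Γ * ∫ x in a..b, w x ^ 2 :=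
          hcoercive.trans (hgalerkin.trans hbounded)
      _ ≤ Γ * (M ^ 2 * (b - a)) := by gcongr; exact integral_sq_le_sSup_sq_mul hab.le hw
  have hL2 : ∫ x in a..b, p.eval x ^ 2 ≤ (√Γ / β * M) ^ 2 * (b - a) :=
    calc ∫ x in a..b, p.eval x ^ 2 = (β ^ 2 * ∫ x in a..b, p.eval x ^ 2) / β ^ 2 := by
          field_simp
      _ ≤ Γ * (M ^ 2 * (b - a)) / β ^ 2 := by gcongr
      _ = (√Γ / β * M) ^ 2 * (b - a) := by
          rw [mul_pow, div_pow, Real.sq_sqrt hΓ.le]; field_simp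
  have hM : 0 ≤ M := sSup_image_abs_nonneg hab.le hw
  simpa only [mul_assoc] using hsup a b hab p hp _ (by positivity) hL2 t ht

theorem integral_iterate_derivative_mul_eq {f : ℝ[X]} {a b : ℝ} {n : ℕ}
    (ha : (X - C a) ^ n ∣ f) (hb : (X - C b) ^ n ∣ f) :
    ∀ j ≤ n, ∀ v : ℝ[X], ∫ x in a..b, (derivative^[j] f).eval x * v.eval x =
      (-1) ^ j * ∫ x in a..b, f.eval x * (derivative^[j] v).eval x := by
  intro j
  induction j with
  | zero => simp
  | succ j ih =>
    intro hj v
    have hvanish : ∀ r, (X - C r) ^ n ∣ f → (derivative^[j] f).eval r = 0 := fun r hr =>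
      dvd_iff_isRoot.mp <| (dvd_pow_self _ (by omega)).trans
        (pow_sub_dvd_iterate_derivative_of_pow_dvd j hr)
    have hparts := integral_mul_deriv_eq_deriv_mul
      (fun x _ => (derivative^[j] f).hasDerivAt x) (fun x _ => v.hasDerivAt x)
      ((derivative (derivative^[j] f)).continuous.intervalIntegrable a b)
      ((derivative v).continuous.intervalIntegrable a b)
    rw [hvanish a ha, hvanish b hb, ih (by omega) (derivative v)] at hparts
    rw [Function.iterate_succ_apply', Function.iterate_succ_apply, pow_succ]
    linarith

theorem eval_iterate_derivative_X_sub_C_pow_mul (r : ℝ) (n : ℕ) (h : ℝ[X]) :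
    (derivative^[n] ((X - C r) ^ n * h)).eval r = n ! * h.eval r := by
  induction n generalizing h with
  | zero => simp
  | succ n ih =>
    have hderiv : derivative ((X - C r) ^ (n + 1) * h)
        = (X - C r) ^ n * (C ((n + 1 : ℕ) : ℝ) * h + (X - C r) * derivative h) := by
      rw [derivative_mul, derivative_pow]
      simp only [derivative_sub, derivative_X, derivative_C, sub_zero, mul_one,
        Nat.add_sub_cancel]
      push_cast
      ring
    rw [Function.iterate_succ_apply, hderiv, ih]
    simp [Nat.factorial_succ]
    ring

section Legendre

variable (k : ℕ) (a b : ℝ)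

/-- Rodrigues' formula: `k! (b - a)ᵏ` times the Legendre polynomial of degree `k` on `[a, b]`. -/
noncomputable def legendreOn : ℝ[X] :=
  derivative^[k] ((X - C a) ^ k * (X - C b) ^ k)

theorem monic_X_sub_C_pow_mul_X_sub_C_pow : ((X - C a) ^ k * (X - C b) ^ k).Monic :=
  ((monic_X_sub_C a).pow k).mul ((monic_X_sub_C b).pow k)

theorem natDegree_X_sub_C_pow_mul_X_sub_C_pow :
    ((X - C a) ^ k * (X - C b) ^ k).natDegree = k + k := by
  rw [((monic_X_sub_C a).pow k).natDegree_mul ((monic_X_sub_C b).pow k)]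
  simp

theorem degree_legendreOn_le : (legendreOn k a b).degree ≤ k := by
  rw [← natDegree_le_iff_degree_le, legendreOn]
  refine (natDegree_iterate_derivative _ k).trans ?_
  rw [natDegree_X_sub_C_pow_mul_X_sub_C_pow]
  omega

theorem coeff_legendreOn : (legendreOn k a b).coeff k = (k + k).descFactorial k := by
  have h := (monic_X_sub_C_pow_mul_X_sub_C_pow k a b).coeff_natDegree
  rw [natDegree_X_sub_C_pow_mul_X_sub_C_pow] at h
  simp [legendreOn, coeff_iterate_derivative, h]

theorem coeff_legendreOn_ne_zero : (legendreOn k a b).coeff k ≠ 0 := by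
  rw [coeff_legendreOn]
  exact_mod_cast (Nat.descFactorial_pos.mpr (by omega)).ne'

theorem iterate_derivative_legendreOn :
    derivative^[k] (legendreOn k a b) = C ((k + k)! : ℝ) := by
  have h := (monic_X_sub_C_pow_mul_X_sub_C_pow k a b).coeff_natDegree
  rw [natDegree_X_sub_C_pow_mul_X_sub_C_pow] at h
  rw [legendreOn, ← Function.iterate_add_apply]
  rw [eq_C_of_natDegree_le_zero ((natDegree_iterate_derivative _ _).trans (by
    rw [natDegree_X_sub_C_pow_mul_X_sub_C_pow]; omega))]
  simp [coeff_iterate_derivative, h, Nat.descFactorial_self]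

theorem integral_legendreOn_mul_eq_zero {v : ℝ[X]} (hv : v.degree < k) :
    ∫ x in a..b, (legendreOn k a b).eval x * v.eval x = 0 := by
  rcases eq_or_ne v 0 with rfl | hv0
  · simp
  rw [legendreOn, integral_iterate_derivative_mul_eq (dvd_mul_right _ _) (dvd_mul_left _ _) k
    le_rfl, iterate_derivative_eq_zero ((natDegree_lt_iff_degree_lt hv0).mpr hv)]
  simp

theorem integral_legendreOn_sq_le (hab : a ≤ b) :
    ∫ x in a..b, (legendreOn k a b).eval x ^ 2 ≤ (k + k)! * (b - a) ^ (k + k + 1) := by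
  set f : ℝ[X] := (X - C a) ^ k * (X - C b) ^ k
  have hf : ∀ x ∈ Icc a b, |f.eval x| ≤ (b - a) ^ (k + k) := fun x hx => by
    simp only [f, eval_mul, eval_pow, eval_sub, eval_X, eval_C, abs_mul, abs_pow, pow_add]
    gcongr <;> exact abs_le.mpr ⟨by linarith [hx.1, hx.2], by linarith [hx.1, hx.2]⟩
  have hparts : ∫ x in a..b, (legendreOn k a b).eval x ^ 2 =
      (-1) ^ k * ((k + k)! * ∫ x in a..b, f.eval x) := by
    simp only [sq]
    rw [legendreOn, integral_iterate_derivative_mul_eq (dvd_mul_right _ _) (dvd_mul_left _ _) k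
      le_rfl, ← legendreOn, iterate_derivative_legendreOn]
    simp only [eval_C, integral_mul_const]
    ring
  calc ∫ x in a..b, (legendreOn k a b).eval x ^ 2
      ≤ (k + k)! * |∫ x in a..b, f.eval x| := by
        rw [hparts]; refine (le_abs_self _).trans_eq ?_; simp [abs_mul]
    _ ≤ (k + k)! * ∫ x in a..b, (b - a) ^ (k + k) := by
        gcongr
        exact (abs_integral_le_integral_abs hab).trans (integral_mono_on hab
          (f.continuous.abs.intervalIntegrable a b) intervalIntegrable_const hf)
    _ = (k + k)! * (b - a) ^ (k + k + 1) := by rw [integral_const, smul_eq_mul]; ring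

theorem abs_eval_legendreOn (hab : a ≤ b) {x₀ : ℝ} (hx₀ : x₀ = a ∨ x₀ = b) :
    |(legendreOn k a b).eval x₀| = k ! * (b - a) ^ k := by
  rcases hx₀ with rfl | rfl
  · rw [legendreOn, eval_iterate_derivative_X_sub_C_pow_mul]
    simp [abs_mul, abs_pow, abs_sub_comm, abs_of_nonneg (sub_nonneg.mpr hab)]
  · rw [legendreOn, mul_comm, eval_iterate_derivative_X_sub_C_pow_mul]
    simp [abs_mul, abs_pow, abs_of_nonneg (sub_nonneg.mpr hab)]

end Legendre

theorem exists_abs_eval_legendreOn_le (k : ℕ) :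
    ∃ K > 0, ∀ a b : ℝ, a < b → ∀ t ∈ Icc a b,
      |(legendreOn k a b).eval t| ≤ K * (b - a) ^ k := by
  obtain ⟨K, hK, hsup⟩ := exists_abs_eval_le_of_integral_sq_le k
  refine ⟨K * √((k + k)! : ℝ), by positivity, fun a b hab t ht => ?_⟩
  have hL2 : ∫ x in a..b, (legendreOn k a b).eval x ^ 2 ≤
      (√((k + k)! : ℝ) * (b - a) ^ k) ^ 2 * (b - a) := by
    refine (integral_legendreOn_sq_le k a b hab.le).trans_eq ?_
    rw [mul_pow, Real.sq_sqrt (by positivity)]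
    ring
  have hba : 0 < b - a := sub_pos.mpr hab
  simpa only [mul_assoc] using
    hsup a b hab _ (degree_legendreOn_le k a b) _ (by positivity) hL2 t ht

theorem degree_sub_C_mul_lt {R : Type*} [Field R] {p q : R[X]} {k : ℕ} (hp : p.degree ≤ k)
    (hq : q.degree ≤ k) (hqk : q.coeff k ≠ 0) :
    (p - C (p.coeff k / q.coeff k) * q).degree < k := by
  rw [degree_lt_iff_coeff_zero]
  intro m hm
  rcases hm.eq_or_lt with rfl | hm
  · simp [div_mul_cancel₀ _ hqk]
  · simp [coeff_eq_zero_of_degree_lt (hp.trans_lt (by exact_mod_cast hm)),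
      coeff_eq_zero_of_degree_lt (hq.trans_lt (by exact_mod_cast hm))]

theorem degree_le_sub_one_of_degree_lt {R : Type*} [Semiring R] {v : R[X]} {k : ℕ}
    (hv : v.degree < k) : v.degree ≤ ((k - 1 : ℕ) : WithBot ℕ) := by
  rw [degree_lt_iff_coeff_zero] at hv
  rw [degree_le_iff_coeff_zero]
  intro m hm
  exact hv m (by norm_cast at hm; omega)

theorem exists_abs_eval_le_of_gaussRadau (k : ℕ) :
    ∃ K > 0, ∀ a b : ℝ, a < b → ∀ w : ℝ → ℝ, ContinuousOn w (Icc a b) →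
      ∀ p : ℝ[X], p.degree ≤ k →
      (∀ v : ℝ[X], v.degree < k →
        ∫ x in a..b, p.eval x * v.eval x = ∫ x in a..b, w x * v.eval x) →
      ∀ x₀, (x₀ = a ∨ x₀ = b) → p.eval x₀ = w x₀ →
      ∀ t ∈ Icc a b, |p.eval t| ≤ K * sSup ((fun s => |w s|) '' Icc a b) := by
  obtain ⟨K₀, hK₀, hproj⟩ :=
    exists_abs_eval_le_of_integral_weight_mul_eq k one_pos (le_of_eq (one_pow 2))
  obtain ⟨K₁, hK₁, hL⟩ := exists_abs_eval_legendreOn_le k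
  refine ⟨K₀ + K₁ / k ! * (1 + K₀), by positivity,
    fun a b hab w hw p hp hmom x₀ hx₀ hpx₀ t ht => ?_⟩
  set M := sSup ((fun s => |w s|) '' Icc a b)
  set L := legendreOn k a b
  set c := p.coeff k / L.coeff k
  set s := p - C c * L
  have hs_deg : s.degree < k :=
    degree_sub_C_mul_lt hp (degree_legendreOn_le k a b) (coeff_legendreOn_ne_zero k a b)
  have hs_mom : ∫ x in a..b, 1 * s.eval x * s.eval x = ∫ x in a..b, 1 * w x * s.eval x := by
    have hsplit : ∫ x in a..b, s.eval x * s.eval x =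
        (∫ x in a..b, p.eval x * s.eval x) - c * ∫ x in a..b, L.eval x * s.eval x := by
      rw [← integral_const_mul, ← integral_sub
        ((by fun_prop : Continuous fun x => p.eval x * s.eval x).intervalIntegrable a b)
        ((by fun_prop : Continuous fun x => c * (L.eval x * s.eval x)).intervalIntegrable a b)]
      refine integral_congr fun x _ => ?_
      simp only [s, eval_sub, eval_mul, eval_C]
      ring
    simp only [one_mul]
    rw [hsplit, integral_legendreOn_mul_eq_zero k a b hs_deg, ← hmom s hs_deg]
    ring
  have hs_sup : ∀ r ∈ Icc a b, |s.eval r| ≤ K₀ * M := fun r hr =>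
    hproj a b hab (fun _ => 1) continuousOn_const (fun _ _ => by norm_num) w hw s
      hs_deg.le hs_mom r hr
  have hx₀_mem : x₀ ∈ Icc a b := by
    rcases hx₀ with rfl | rfl
    exacts [left_mem_Icc.mpr hab.le, right_mem_Icc.mpr hab.le]
  have hc : |c| * (k ! * (b - a) ^ k) ≤ (1 + K₀) * M := by
    have hcL : c * L.eval x₀ = w x₀ - s.eval x₀ := by simp [s, ← hpx₀]
    rw [← abs_eval_legendreOn k a b hab.le hx₀, ← abs_mul, hcL]
    calc |w x₀ - s.eval x₀| ≤ |w x₀| + |s.eval x₀| := abs_sub _ _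
      _ ≤ M + K₀ * M := add_le_add (abs_le_sSup_image_abs hw hx₀_mem) (hs_sup x₀ hx₀_mem)
      _ = (1 + K₀) * M := by ring
  have hp_eq : p.eval t = s.eval t + c * L.eval t := by simp [s]
  calc |p.eval t| ≤ |s.eval t| + |c| * |L.eval t| := by
        rw [hp_eq, ← abs_mul]; exact abs_add_le _ _
    _ ≤ K₀ * M + |c| * (K₁ * (b - a) ^ k) := by gcongr; exacts [hs_sup t ht, hL a b hab t ht]
    _ = K₀ * M + K₁ / k ! * (|c| * (k ! * (b - a) ^ k)) := by field_simp
    _ ≤ K₀ * M + K₁ / k ! * ((1 + K₀) * M) := by gcongr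
    _ = (K₀ + K₁ / k ! * (1 + K₀)) * M := by ring

end ProjectionStability

open ProjectionStability

theorem projections_Linfty_stability_general
    (k : ℕ) (β Γ : ℝ) (hβ : 0 < β) (hβΓ : β ^ 2 ≤ Γ) :
    ∃ C : ℝ, 0 < C ∧
      ∀ a b : ℝ, a < b →
      ∀ bf : ℝ → ℝ, ContinuousOn bf (Set.Icc a b) →
        (∀ t ∈ Set.Icc a b, β ^ 2 ≤ bf t ∧ bf t ≤ Γ) →
      ∀ w : ℝ → ℝ, ContinuousOn w (Set.Icc a b) →
      ∀ p : Polynomial ℝ, p.degree ≤ (k : WithBot ℕ) →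
        ((∀ v : Polynomial ℝ, v.degree ≤ (k : WithBot ℕ) →
            ∫ t in a..b, p.eval t * v.eval t = ∫ t in a..b, w t * v.eval t) ∨
         (∀ v : Polynomial ℝ, v.degree ≤ (k : WithBot ℕ) →
            ∫ t in a..b, bf t * p.eval t * v.eval t =
              ∫ t in a..b, bf t * w t * v.eval t) ∨
         ((∀ v : Polynomial ℝ, v.degree ≤ ((k - 1 : ℕ) : WithBot ℕ) →
            ∫ t in a..b, p.eval t * v.eval t = ∫ t in a..b, w t * v.eval t) ∧
           p.eval b = w b) ∨
         ((∀ v : Polynomial ℝ, v.degree ≤ ((k - 1 : ℕ) : WithBot ℕ) →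
            ∫ t in a..b, p.eval t * v.eval t = ∫ t in a..b, w t * v.eval t) ∧
           p.eval a = w a)) →
        ∀ t ∈ Set.Icc a b,
          |p.eval t| ≤ C * sSup ((fun s => |w s|) '' Set.Icc a b) := by
  obtain ⟨K₁, hK₁, hproj⟩ := exists_abs_eval_le_of_integral_weight_mul_eq k hβ hβΓ
  obtain ⟨K₂, hK₂, hradau⟩ := exists_abs_eval_le_of_gaussRadau k
  refine ⟨max K₁ K₂, lt_max_of_lt_left hK₁, fun a b hab bf hbf hbfβΓ w hw p hp hR t ht => ?_⟩
  have hM := sSup_image_abs_nonneg hab.le hw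
  have hbound : |p.eval t| ≤ K₁ * sSup ((fun s => |w s|) '' Set.Icc a b) ∨
      |p.eval t| ≤ K₂ * sSup ((fun s => |w s|) '' Set.Icc a b) := by
    rcases hR with hπ | hπb | ⟨hmom, hpb⟩ | ⟨hmom, hpa⟩
    -- the unweighted projection is the weighted one for the constant weight `β ^ 2`
    · refine .inl (hproj a b hab (fun _ => β ^ 2) continuousOn_const (fun _ _ => ⟨le_rfl, hβΓ⟩)
        w hw p hp ?_ t ht)
      simp only [mul_assoc, integral_const_mul, hπ p hp]
    · exact .inl (hproj a b hab bf hbf hbfβΓ w hw p hp (hπb p hp) t ht)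
    · exact .inr (hradau a b hab w hw p hp (fun v hv => hmom v (degree_le_sub_one_of_degree_lt hv))
        b (.inr rfl) hpb t ht)
    · exact .inr (hradau a b hab w hw p hp (fun v hv => hmom v (degree_le_sub_one_of_degree_lt hv))
        a (.inl rfl) hpa t ht)
  rcases hbound with h | h
  · exact h.trans (mul_le_mul_of_nonneg_right (le_max_left _ _) hM)
  · exact h.trans (mul_le_mul_of_nonneg_right (le_max_right _ _) hM)

theorem projections_Linfty_stability
    (k : ℕ) (hk : 1 ≤ k) (β Γ : ℝ) (hβ : 0 < β) (hβΓ : β ^ 2 ≤ Γ) :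
    ∃ C : ℝ, 0 < C ∧
      ∀ a b : ℝ, a < b →
      ∀ bf : ℝ → ℝ, ContinuousOn bf (Set.Icc a b) →
        (∀ t ∈ Set.Icc a b, β ^ 2 ≤ bf t ∧ bf t ≤ Γ) →
      ∀ w : ℝ → ℝ, ContinuousOn w (Set.Icc a b) →
      ∀ p : Polynomial ℝ, p.degree ≤ (k : WithBot ℕ) →
        ((∀ v : Polynomial ℝ, v.degree ≤ (k : WithBot ℕ) →
            ∫ t in a..b, p.eval t * v.eval t = ∫ t in a..b, w t * v.eval t) ∨
         (∀ v : Polynomial ℝ, v.degree ≤ (k : WithBot ℕ) →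
            ∫ t in a..b, bf t * p.eval t * v.eval t =
              ∫ t in a..b, bf t * w t * v.eval t) ∨
         ((∀ v : Polynomial ℝ, v.degree ≤ ((k - 1 : ℕ) : WithBot ℕ) →
            ∫ t in a..b, p.eval t * v.eval t = ∫ t in a..b, w t * v.eval t) ∧
           p.eval b = w b) ∨
         ((∀ v : Polynomial ℝ, v.degree ≤ ((k - 1 : ℕ) : WithBot ℕ) →
            ∫ t in a..b, p.eval t * v.eval t = ∫ t in a..b, w t * v.eval t) ∧
           p.eval a = w a)) →
        ∀ t ∈ Set.Icc a b,
          |p.eval t| ≤ C * sSup ((fun s => |w s|) '' Set.Icc a b) :=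
  projections_Linfty_stability_general k β Γ hβ hβΓ
end

section
/- There exists a constant C > 0 depending only on C₀, C₁, β, σ and k (independent of ε and N) such that ‖q - P_N⁺ q‖_{L∞(I_i)} ≤ C ε^{1/2} (N^{-1} ln N)^{k+1} for every i ∈ {1, …, N/4} ∪ {3N/4+1, …, N}. -/
/-!
On a layer cell of width `h = 4σ√ε ln N / (β N)` both the local L² projection and the
Gauß–Radau projection reproduce polynomials of degree `k`. Pulled back to `[0, 1]` they are
defined by finitely many functionals (moments, and for Gauß–Radau the value at `0`) that are
unisolvent on polynomials of degree `k`, so by equivalence of norms on that space they are stable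
in the sup norm, uniformly in the cell. Comparing with the Taylor polynomial gives
`|q - P q| ≤ C h^(k+1) max |q^(k+1)|` on the cell, and `|q^(k+1)| ≤ 3 C₀ ε^(-k/2)` on `[0, 1]`;
since `ε^(-k/2) (√ε)^(k+1) = √ε`, this is `C √ε (N⁻¹ ln N)^(k+1)`.
-/

open Set Polynomial intervalIntegral
open scoped Nat

noncomputable def unitMoment (j : ℕ) : ℝ[X] →ₗ[ℝ] ℝ where
  toFun r := ∫ s in (0 : ℝ)..1, r.eval s * s ^ j
  map_add' r u := by
    simp only [eval_add, add_mul]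
    exact integral_add ((r.continuous.mul (continuous_pow j)).intervalIntegrable _ _)
      ((u.continuous.mul (continuous_pow j)).intervalIntegrable _ _)
  map_smul' c r := by
    simp only [eval_smul, smul_eq_mul, mul_assoc, RingHom.id_apply]
    exact integral_const_mul c _

theorem unitMoment_apply (j : ℕ) (r : ℝ[X]) :
    unitMoment j r = ∫ s in (0 : ℝ)..1, r.eval s * s ^ j := rfl

theorem integral_eval_mul_eval_eq_sum_unitMoment (r u : ℝ[X]) {m : ℕ} (hu : u.natDegree < m) :
    ∫ s in (0 : ℝ)..1, r.eval s * u.eval s =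
      ∑ j ∈ Finset.range m, u.coeff j * unitMoment j r := by
  simp_rw [eval_eq_sum_range' hu, Finset.mul_sum]
  rw [integral_finsetSum fun j _ => by
    exact (r.continuous.mul (continuous_const.mul (continuous_pow j))).intervalIntegrable _ _]
  refine Finset.sum_congr rfl fun j _ => ?_
  rw [unitMoment_apply, ← integral_const_mul]
  congr 1 with s
  ring

theorem integral_pow_mul_sq_pos (e : ℕ) {u : ℝ[X]} (hu : u ≠ 0) :
    0 < ∫ s in (0 : ℝ)..1, s ^ e * u.eval s ^ 2 := by
  obtain ⟨c, hc, hroot⟩ :=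
    (Ioc_infinite (zero_lt_one' ℝ)).exists_notMem_finset u.roots.toFinset
  rw [Multiset.mem_toFinset, mem_roots hu, IsRoot.def] at hroot
  refine integral_pos zero_lt_one (by fun_prop) (fun s hs => by have := hs.1.le; positivity)
    ⟨c, Ioc_subset_Icc_self hc, by have := hc.1; positivity⟩

theorem eq_zero_of_unitMoment_eq_zero {k : ℕ} {r : ℝ[X]} (hr : r.natDegree ≤ k)
    (h : ∀ j ≤ k, unitMoment j r = 0) : r = 0 := by
  by_contra hne
  have hsq : ∫ s in (0 : ℝ)..1, r.eval s * r.eval s = 0 := by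
    rw [integral_eval_mul_eval_eq_sum_unitMoment r r (Nat.lt_succ_of_le hr)]
    exact Finset.sum_eq_zero fun j hj => by
      rw [h j (Nat.lt_succ_iff.mp (Finset.mem_range.mp hj)), mul_zero]
  have := integral_pow_mul_sq_pos 0 hne
  simp only [pow_zero, one_mul, sq] at this
  exact this.ne' hsq

-- Writing `r = X * u`, the moment conditions give `∫₀¹ s u(s)² ds = 0`.
theorem eq_zero_of_eval_zero_of_unitMoment_eq_zero {k : ℕ} {r : ℝ[X]} (hr : r.natDegree ≤ k)
    (h₀ : r.eval 0 = 0) (h : ∀ j < k, unitMoment j r = 0) : r = 0 := by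
  obtain ⟨u, rfl⟩ : X ∣ r := X_dvd_iff.mpr (by rwa [coeff_zero_eq_eval_zero])
  by_contra hne
  have hu : u ≠ 0 := right_ne_zero_of_mul hne
  have hdeg : u.natDegree < k := by
    rw [natDegree_mul X_ne_zero hu, natDegree_X] at hr
    omega
  have hzero : ∫ s in (0 : ℝ)..1, (X * u).eval s * u.eval s = 0 := by
    rw [integral_eval_mul_eval_eq_sum_unitMoment _ u hdeg]
    exact Finset.sum_eq_zero fun j hj => by rw [h j (Finset.mem_range.mp hj), mul_zero]
  have := integral_pow_mul_sq_pos 1 hu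
  simp only [eval_mul, eval_X, pow_one, sq, ← mul_assoc] at this hzero
  exact this.ne' hzero

theorem abs_eval_le_of_abs_coeff_le {k : ℕ} {r : ℝ[X]} (hr : r.natDegree ≤ k) {B : ℝ}
    (hB : ∀ i ≤ k, |r.coeff i| ≤ B) {s : ℝ} (hs : |s| ≤ 1) :
    |r.eval s| ≤ (k + 1) * B := by
  rw [eval_eq_sum_range' (Nat.lt_succ_of_le hr)]
  calc |∑ i ∈ Finset.range (k + 1), r.coeff i * s ^ i|
      ≤ ∑ i ∈ Finset.range (k + 1), |r.coeff i * s ^ i| := Finset.abs_sum_le_sum_abs _ _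
    _ ≤ ∑ _i ∈ Finset.range (k + 1), B := Finset.sum_le_sum fun i hi => by
        rw [abs_mul, abs_pow]
        exact (mul_le_of_le_one_right (abs_nonneg _) (pow_le_one₀ (abs_nonneg s) hs)).trans
          (hB i (Nat.lt_succ_iff.mp (Finset.mem_range.mp hi)))
    _ = (k + 1) * B := by simp

theorem mem_degreeLT_succ_iff {k : ℕ} {r : ℝ[X]} :
    r ∈ degreeLT ℝ (k + 1) ↔ r.natDegree ≤ k := by
  rw [degreeLT_succ_eq_degreeLE, mem_degreeLE, natDegree_le_iff_degree_le]

theorem exists_abs_eval_le_of_unisolvent {ι : Type*} [Fintype ι] (k : ℕ)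
    (ℓ : ι → ℝ[X] →ₗ[ℝ] ℝ)
    (hℓ : ∀ r : ℝ[X], r.natDegree ≤ k → (∀ i, ℓ i r = 0) → r = 0) :
    ∃ K : ℝ, 0 ≤ K ∧ ∀ r : ℝ[X], r.natDegree ≤ k → ∀ δ : ℝ, (∀ i, |ℓ i r| ≤ δ) →
      ∀ s, |s| ≤ 1 → |r.eval s| ≤ K * δ := by
  let Φ : (Fin (k + 1) → ℝ) →ₗ[ℝ] ι → ℝ :=
    LinearMap.pi (fun i => ℓ i ∘ₗ (degreeLT ℝ (k + 1)).subtype) ∘ₗ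
      (degreeLTEquiv ℝ (k + 1)).symm.toLinearMap
  have hΦ : LinearMap.ker Φ = ⊥ := by
    refine LinearMap.ker_eq_bot'.mpr fun c hc => ?_
    have := hℓ _ (mem_degreeLT_succ_iff.mp ((degreeLTEquiv ℝ (k + 1)).symm c).2)
      fun i => congrFun hc i
    exact (LinearEquiv.map_eq_zero_iff _).mp (Submodule.coe_eq_zero.mp this)
  obtain ⟨K, -, hK⟩ := Φ.exists_antilipschitzWith hΦ
  have : Nonempty ι := by
    by_contra hempty
    rw [not_nonempty_iff] at hempty
    exact one_ne_zero (hℓ 1 (natDegree_one.trans_le k.zero_le) fun i => isEmptyElim i)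
  refine ⟨(k + 1) * K, by positivity, fun r hr δ hδ s hs => ?_⟩
  set c := degreeLTEquiv ℝ (k + 1) ⟨r, mem_degreeLT_succ_iff.mpr hr⟩
  have hΦc : Φ c = fun i => ℓ i r := by ext i; simp [Φ, c]
  have hc : ‖c‖ ≤ K * δ := by
    calc ‖c‖ ≤ K * ‖Φ c‖ := by simpa using hK.le_mul_norm_sub c 0
      _ ≤ K * δ := by
        gcongr
        rw [hΦc, pi_norm_le_iff_of_nonempty]
        exact hδ
  refine abs_eval_le_of_abs_coeff_le hr (fun i hi => ?_) hs |>.trans_eq (mul_assoc _ _ _).symm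
  exact (norm_le_pi_norm c ⟨i, Nat.lt_succ_of_le hi⟩).trans hc

theorem exists_abs_eval_le_of_abs_unitMoment_le (k : ℕ) :
    ∃ K : ℝ, 0 ≤ K ∧ ∀ r : ℝ[X], r.natDegree ≤ k → ∀ δ : ℝ,
      (∀ j ≤ k, |unitMoment j r| ≤ δ) → ∀ s, |s| ≤ 1 → |r.eval s| ≤ K * δ := by
  obtain ⟨K, hK, hbound⟩ :=
    exists_abs_eval_le_of_unisolvent k (fun j : Fin (k + 1) => unitMoment j)
    fun r hr h => eq_zero_of_unitMoment_eq_zero hr fun j hj => h ⟨j, Nat.lt_succ_of_le hj⟩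
  exact ⟨K, hK, fun r hr δ hδ => hbound r hr δ fun j => hδ j (Nat.lt_succ_iff.mp j.2)⟩

theorem exists_abs_eval_le_of_abs_eval_zero_le_of_abs_unitMoment_le (k : ℕ) :
    ∃ K : ℝ, 0 ≤ K ∧ ∀ r : ℝ[X], r.natDegree ≤ k → ∀ δ : ℝ, |r.eval 0| ≤ δ →
      (∀ j < k, |unitMoment j r| ≤ δ) → ∀ s, |s| ≤ 1 → |r.eval s| ≤ K * δ := by
  obtain ⟨K, hK, hbound⟩ := exists_abs_eval_le_of_unisolvent k
    (fun o : Option (Fin k) => o.elim (leval 0) fun j => unitMoment j)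
    fun r hr h => eq_zero_of_eval_zero_of_unitMoment_eq_zero hr (h none)
      fun j hj => h (some ⟨j, hj⟩)
  refine ⟨K, hK, fun r hr δ h₀ hδ => hbound r hr δ ?_⟩
  rintro (_ | j)
  · exact h₀
  · exact hδ j j.2

theorem unitMoment_comp_affine (r : ℝ[X]) (j : ℕ) {a b : ℝ} (hab : a ≠ b) :
    unitMoment j (r.comp (C (b - a) * X + C a)) =
      (b - a)⁻¹ * ∫ t in a..b, r.eval t * ((t - a) / (b - a)) ^ j := by
  have hba : b - a ≠ 0 := sub_ne_zero.mpr hab.symm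
  have := integral_comp_mul_add (a := 0) (b := 1)
    (fun t => r.eval t * ((t - a) / (b - a)) ^ j) hba a
  simp only [mul_zero, zero_add, mul_one, sub_add_cancel, add_sub_cancel_right,
    mul_div_cancel_left₀ _ hba, smul_eq_mul] at this
  rw [unitMoment_apply, ← this]
  simp

theorem abs_unitMoment_comp_sub_le {F : ℝ → ℝ} (hF : Continuous F) {p T : ℝ[X]}
    {a b δ : ℝ} (hab : a < b) (hT : ∀ t ∈ Icc a b, |F t - T.eval t| ≤ δ) {j : ℕ}
    (hp : ∀ v : ℝ[X], v.degree ≤ j →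
      ∫ t in a..b, p.eval t * v.eval t = ∫ t in a..b, F t * v.eval t) :
    |unitMoment j ((p - T).comp (C (b - a) * X + C a))| ≤ δ := by
  have hba : 0 < b - a := sub_pos.mpr hab
  have hδ : 0 ≤ δ := (abs_nonneg _).trans (hT a ⟨le_rfl, hab.le⟩)
  set w : ℝ → ℝ := fun t => ((t - a) / (b - a)) ^ j
  have hw : Continuous w := by fun_prop
  have hw_le : ∀ t ∈ Ioc a b, |w t| ≤ 1 := fun t ht => by
    rw [abs_pow]
    refine pow_le_one₀ (abs_nonneg _) ?_
    rw [abs_div, abs_of_pos hba, div_le_one hba, abs_le]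
    constructor <;> linarith [ht.1, ht.2]
  have hv : ∫ t in a..b, p.eval t * w t = ∫ t in a..b, F t * w t := by
    have := hp ((C (b - a)⁻¹ * (X - C a)) ^ j) <| by
      refine degree_le_of_natDegree_le <| (natDegree_pow_le_of_le j <|
        (natDegree_C_mul_le _ _).trans (natDegree_X_sub_C a).le).trans_eq (mul_one j)
    simpa [w, div_eq_inv_mul] using this
  have hsub : ∫ t in a..b, (p - T).eval t * w t = ∫ t in a..b, (F t - T.eval t) * w t := by
    simp only [eval_sub, sub_mul]
    rw [integral_sub, integral_sub, hv] <;>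
      exact Continuous.intervalIntegrable (by fun_prop) _ _
  rw [unitMoment_comp_affine _ _ hab.ne, hsub, abs_mul, abs_inv, abs_of_pos hba,
    inv_mul_le_iff₀ hba, mul_comm]
  simpa [abs_of_pos hba] using norm_integral_le_of_norm_le_const (a := a) (b := b)
    (f := fun t => (F t - T.eval t) * w t) fun t ht => by
      rw [uIoc_of_le hab.le] at ht
      rw [Real.norm_eq_abs, abs_mul]
      exact (mul_le_mul (hT t (Ioc_subset_Icc_self ht)) (hw_le t ht) (abs_nonneg _) hδ).trans_eq
        (mul_one δ)

theorem exists_natDegree_le_abs_sub_eval_le {F : ℝ → ℝ} {k : ℕ}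
    (hF : ContDiff ℝ (k + 1) F) {a b M : ℝ} (hab : a < b)
    (hM : ∀ t ∈ Icc a b, |iteratedDeriv (k + 1) F t| ≤ M) :
    ∃ T : ℝ[X], T.natDegree ≤ k ∧
      ∀ t ∈ Icc a b, |F t - T.eval t| ≤ M * (b - a) ^ (k + 1) / k ! := by
  refine ⟨∑ j ∈ Finset.range (k + 1),
    C (iteratedDerivWithin j F (Icc a b) a / j !) * (X - C a) ^ j, ?_, fun t ht => ?_⟩
  · refine natDegree_sum_le_of_forall_le _ _ fun j hj => (natDegree_C_mul_le _ _).trans ?_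
    rw [natDegree_pow, natDegree_X_sub_C, mul_one]
    exact Nat.lt_succ_iff.mp (Finset.mem_range.mp hj)
  have hM₀ : 0 ≤ M := (abs_nonneg _).trans (hM a ⟨le_rfl, hab.le⟩)
  have htaylor := taylor_mean_remainder_bound hab.le hF.contDiffOn ht fun y hy => by
    rw [iteratedDerivWithin_eq_iteratedDeriv (uniqueDiffOn_Icc hab) hF.contDiffAt hy]
    exact hM y hy
  rw [taylor_within_apply, Real.norm_eq_abs] at htaylor
  have heval : (∑ j ∈ Finset.range (k + 1),
      C (iteratedDerivWithin j F (Icc a b) a / j !) * (X - C a) ^ j).eval t =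
      ∑ j ∈ Finset.range (k + 1),
        ((j ! : ℝ)⁻¹ * (t - a) ^ j) • iteratedDerivWithin j F (Icc a b) a := by
    simp only [eval_finsetSum, eval_mul, eval_C, eval_pow, eval_sub, eval_X, smul_eq_mul]
    exact Finset.sum_congr rfl fun j _ => by ring
  rw [heval]
  refine htaylor.trans ?_
  gcongr
  · linarith [ht.1]
  · exact ht.2

theorem natDegree_comp_linear_le (r : ℝ[X]) (c d : ℝ) :
    (r.comp (C c * X + C d)).natDegree ≤ r.natDegree :=
  natDegree_comp_le.trans ((Nat.mul_le_mul_left _ natDegree_linear_le).trans_eq (mul_one _))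

theorem abs_sub_eval_le_of_abs_eval_comp_le {F : ℝ → ℝ} {T p : ℝ[X]} {a b δ K : ℝ}
    (hab : a < b) (hT : ∀ t ∈ Icc a b, |F t - T.eval t| ≤ δ)
    (hr : ∀ s, |s| ≤ 1 → |((p - T).comp (C (b - a) * X + C a)).eval s| ≤ K * δ) :
    ∀ t ∈ Icc a b, |F t - p.eval t| ≤ (1 + K) * δ := by
  intro t ht
  have hba : 0 < b - a := sub_pos.mpr hab
  have hs : |(t - a) / (b - a)| ≤ 1 := by
    rw [abs_div, abs_of_pos hba, div_le_one hba, abs_le]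
    constructor <;> linarith [ht.1, ht.2]
  have hpT := hr _ hs
  rw [eval_comp, eval_add, eval_mul, eval_C, eval_X, eval_C, mul_div_cancel₀ _ hba.ne',
    sub_add_cancel, eval_sub] at hpT
  calc |F t - p.eval t| = |(F t - T.eval t) - (p.eval t - T.eval t)| := by ring_nf
    _ ≤ δ + K * δ := (abs_sub _ _).trans (add_le_add (hT t ht) hpT)
    _ = (1 + K) * δ := by ring

theorem degree_le_natCast_sub_one_of_degree_lt {v : ℝ[X]} {k : ℕ} (h : v.degree < k) :
    v.degree ≤ (k - 1 : ℕ) := by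
  rcases eq_or_ne v 0 with rfl | hv
  · simp
  rw [degree_eq_natDegree hv, Nat.cast_lt] at h
  rw [degree_eq_natDegree hv, Nat.cast_le]
  omega

def IsL2Projection (k : ℕ) (F : ℝ → ℝ) (a b : ℝ) (p : ℝ[X]) : Prop :=
  p.degree ≤ k ∧ ∀ v : ℝ[X], v.degree ≤ k →
    ∫ t in a..b, p.eval t * v.eval t = ∫ t in a..b, F t * v.eval t

def IsRadauProjection (k : ℕ) (F : ℝ → ℝ) (a b : ℝ) (p : ℝ[X]) : Prop :=
  p.degree ≤ k ∧ (∀ v : ℝ[X], v.degree < k →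
    ∫ t in a..b, p.eval t * v.eval t = ∫ t in a..b, F t * v.eval t) ∧ p.eval a = F a

section Projection

variable {k : ℕ} {F G : ℝ → ℝ} {a b : ℝ} {p : ℝ[X]}

theorem IsL2Projection.congr (hp : IsL2Projection k F a b p) (hFG : EqOn F G (uIcc a b)) :
    IsL2Projection k G a b p :=
  ⟨hp.1, fun v hv => (hp.2 v hv).trans (integral_congr fun t ht => by simp only [hFG ht])⟩

theorem IsRadauProjection.congr (hp : IsRadauProjection k F a b p) (hFG : EqOn F G (uIcc a b)) :
    IsRadauProjection k G a b p :=
  ⟨hp.1, fun v hv => (hp.2.1 v hv).trans (integral_congr fun t ht => by simp only [hFG ht]),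
    hp.2.2.trans (hFG left_mem_uIcc)⟩

end Projection

theorem exists_abs_sub_eval_le_of_isL2Projection (k : ℕ) :
    ∃ K : ℝ, 0 < K ∧ ∀ F : ℝ → ℝ, ContDiff ℝ (k + 1) F → ∀ a b M : ℝ, a < b →
      (∀ t ∈ Icc a b, |iteratedDeriv (k + 1) F t| ≤ M) →
      ∀ p : ℝ[X], IsL2Projection k F a b p →
      ∀ t ∈ Icc a b, |F t - p.eval t| ≤ K * M * (b - a) ^ (k + 1) := by
  obtain ⟨K, hK, hstab⟩ := exists_abs_eval_le_of_abs_unitMoment_le k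
  refine ⟨(1 + K) / k !, by positivity, fun F hF a b M hab hM p hp t ht => ?_⟩
  obtain ⟨T, hTdeg, hT⟩ := exists_natDegree_le_abs_sub_eval_le hF hab hM
  have hdeg : ((p - T).comp (C (b - a) * X + C a)).natDegree ≤ k :=
    (natDegree_comp_linear_le _ _ _).trans <|
      (natDegree_sub_le _ _).trans (max_le (natDegree_le_iff_degree_le.mpr hp.1) hTdeg)
  refine (abs_sub_eval_le_of_abs_eval_comp_le hab hT (hstab _ hdeg _ fun j hj =>
    abs_unitMoment_comp_sub_le hF.continuous hab hT fun v hv =>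
      hp.2 v (hv.trans (by exact_mod_cast hj))) t ht).trans_eq (by ring)

theorem exists_abs_sub_eval_le_of_isRadauProjection (k : ℕ) :
    ∃ K : ℝ, 0 < K ∧ ∀ F : ℝ → ℝ, ContDiff ℝ (k + 1) F → ∀ a b M : ℝ, a < b →
      (∀ t ∈ Icc a b, |iteratedDeriv (k + 1) F t| ≤ M) →
      ∀ p : ℝ[X], IsRadauProjection k F a b p →
      ∀ t ∈ Icc a b, |F t - p.eval t| ≤ K * M * (b - a) ^ (k + 1) := by
  obtain ⟨K, hK, hstab⟩ := exists_abs_eval_le_of_abs_eval_zero_le_of_abs_unitMoment_le k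
  refine ⟨(1 + K) / k !, by positivity, fun F hF a b M hab hM p hp t ht => ?_⟩
  obtain ⟨T, hTdeg, hT⟩ := exists_natDegree_le_abs_sub_eval_le hF hab hM
  have hdeg : ((p - T).comp (C (b - a) * X + C a)).natDegree ≤ k :=
    (natDegree_comp_linear_le _ _ _).trans <|
      (natDegree_sub_le _ _).trans (max_le (natDegree_le_iff_degree_le.mpr hp.1) hTdeg)
  have h₀ : |((p - T).comp (C (b - a) * X + C a)).eval 0| ≤ M * (b - a) ^ (k + 1) / k ! := by
    simpa [hp.2.2] using hT a ⟨le_rfl, hab.le⟩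
  refine (abs_sub_eval_le_of_abs_eval_comp_le hab hT (hstab _ hdeg _ h₀ fun j hj =>
    abs_unitMoment_comp_sub_le hF.continuous hab hT fun v hv =>
      hp.2.1 v (hv.trans_lt (by exact_mod_cast hj))) t ht).trans_eq (by ring)

theorem exists_abs_sub_eval_le_of_isL2Projection_or_isRadauProjection (k : ℕ) :
    ∃ K : ℝ, 0 < K ∧ ∀ F : ℝ → ℝ, ContDiff ℝ (k + 1) F → ∀ a b M : ℝ, a < b →
      (∀ t ∈ Icc a b, |iteratedDeriv (k + 1) F t| ≤ M) → ∀ p : ℝ[X],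
      IsL2Projection k F a b p ∨ IsRadauProjection k F a b p →
      ∀ t ∈ Icc a b, |F t - p.eval t| ≤ K * M * (b - a) ^ (k + 1) := by
  obtain ⟨KL, hKL, hL⟩ := exists_abs_sub_eval_le_of_isL2Projection k
  obtain ⟨KR, -, hR⟩ := exists_abs_sub_eval_le_of_isRadauProjection k
  refine ⟨max KL KR, lt_max_of_lt_left hKL, fun F hF a b M hab hM p hp t ht => ?_⟩
  have hM₀ : 0 ≤ M := (abs_nonneg _).trans (hM a ⟨le_rfl, hab.le⟩)
  have hba : 0 ≤ b - a := sub_nonneg.mpr hab.le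
  rcases hp with hp | hp
  · exact (hL F hF a b M hab hM p hp t ht).trans (by gcongr; exact le_max_left _ _)
  · exact (hR F hF a b M hab hM p hp t ht).trans (by gcongr; exact le_max_right _ _)

-- `A` stands for `4σ√ε/β`, so that the transition point is `τ = A ln N / 4`.
noncomputable def shishkinNode (N : ℕ) (A τ : ℝ) (i : ℕ) : ℝ :=
  if i ≤ N / 4 then A * ((i : ℝ) / N) * Real.log N
  else if i ≤ 3 * N / 4 then τ + 2 * (1 - 2 * τ) * ((i : ℝ) / N - 1 / 4)
  else 1 - A * (1 - (i : ℝ) / N) * Real.log N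

section ShishkinMesh

variable {N : ℕ} {A τ : ℝ}

theorem shishkinNode_of_le {i : ℕ} (hi : i ≤ N / 4) :
    shishkinNode N A τ i = A * ((i : ℝ) / N) * Real.log N :=
  if_pos hi

theorem shishkinNode_of_ge (hN₀ : 0 < N) (hN : 4 ∣ N) (hτ : τ = A * Real.log N / 4) {i : ℕ}
    (hi : 3 * N / 4 ≤ i) : shishkinNode N A τ i = 1 - A * (1 - (i : ℝ) / N) * Real.log N := by
  obtain ⟨m, rfl⟩ := hN
  unfold shishkinNode
  rcases hi.eq_or_lt with rfl | hi
  · rw [if_neg (by omega), if_pos le_rfl, hτ, show 3 * (4 * m) / 4 = 3 * m by omega]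
    have : (m : ℝ) ≠ 0 := by exact_mod_cast (by omega : m ≠ 0)
    push_cast
    field_simp
    ring
  · rw [if_neg (by omega), if_neg (by omega)]

theorem shishkinNode_layer_cell (hN₀ : 0 < N) (hN : 4 ∣ N) (hA : 0 ≤ A)
    (hτ : τ = A * Real.log N / 4) (hτ₄ : τ ≤ 1 / 4) {x : ℕ → ℝ}
    (hx : ∀ i ≤ N, x i = shishkinNode N A τ i) {i : ℕ}
    (hi : (1 ≤ i ∧ i ≤ N / 4) ∨ (3 * N / 4 + 1 ≤ i ∧ i ≤ N)) :
    x i = x (i - 1) + A * Real.log N / N ∧ 0 ≤ x (i - 1) ∧ x i ≤ 1 := by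
  have hlog : 0 ≤ Real.log N := Real.log_natCast_nonneg N
  have hN' : (0 : ℝ) < N := by exact_mod_cast hN₀
  rcases hi with ⟨hi₁, hi₂⟩ | ⟨hi₁, hi₂⟩
  · rw [hx i (by omega), hx (i - 1) (by omega), shishkinNode_of_le hi₂,
      shishkinNode_of_le (by omega)]
    have hiN : (i : ℝ) / N ≤ 1 / 4 := by
      rw [div_le_iff₀ hN']
      have : (4 * i : ℝ) ≤ N := by exact_mod_cast (by omega : 4 * i ≤ N)
      linarith
    refine ⟨?_, by positivity, ?_⟩
    · push_cast [Nat.cast_sub hi₁]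
      field_simp
      ring
    · nlinarith [mul_le_mul_of_nonneg_left hiN hA]
  · rw [hx i hi₂, hx (i - 1) (by omega), shishkinNode_of_ge hN₀ hN hτ (by omega),
      shishkinNode_of_ge hN₀ hN hτ (by omega)]
    have hiN : (i : ℝ) / N ≤ 1 := by
      rw [div_le_one hN']
      exact_mod_cast hi₂
    have hiN' : 3 / 4 ≤ ((i - 1 : ℕ) : ℝ) / N := by
      rw [le_div_iff₀ hN']
      have : (3 * N : ℝ) ≤ 4 * (i - 1 : ℕ) := by
        exact_mod_cast (by omega : 3 * N ≤ 4 * (i - 1))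
      linarith
    refine ⟨?_, ?_, ?_⟩
    · push_cast [Nat.cast_sub (by omega : 1 ≤ i)]
      field_simp
      ring
    · nlinarith [mul_le_mul_of_nonneg_left hiN' hA]
    · nlinarith [mul_le_mul_of_nonneg_left hiN hA]

end ShishkinMesh

theorem abs_iteratedDeriv_succ_le_of_layer_bounds {k : ℕ} {ε β C₀ : ℝ}
    {qbar q₁ q₂ : ℝ → ℝ} (hε : 0 < ε) (hε₁ : ε ≤ 1) (hβ : 0 ≤ β) (hC₀ : 0 ≤ C₀)
    (hqbar : ContDiff ℝ (k + 1) qbar) (hq₁ : ContDiff ℝ (k + 1) q₁)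
    (hq₂ : ContDiff ℝ (k + 1) q₂) {t : ℝ} (ht : t ∈ Icc (0 : ℝ) 1)
    (hbar : |iteratedDeriv (k + 1) qbar t| ≤ C₀ * ε)
    (h₁ : |iteratedDeriv (k + 1) q₁ t| ≤
      C₀ * ε ^ (-(((k + 1 : ℕ) : ℝ) - 1) / 2) * Real.exp (-β * t / √ε))
    (h₂ : |iteratedDeriv (k + 1) q₂ t| ≤
      C₀ * ε ^ (-(((k + 1 : ℕ) : ℝ) - 1) / 2) * Real.exp (-β * (1 - t) / √ε)) :
    |iteratedDeriv (k + 1) (fun t => qbar t + q₁ t + q₂ t) t| ≤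
      3 * C₀ * ε ^ (-(k : ℝ) / 2) := by
  have hexp : ∀ y, 0 ≤ y → Real.exp (-β * y / √ε) ≤ 1 := fun y hy =>
    Real.exp_le_one_iff.mpr (div_nonpos_of_nonpos_of_nonneg (by nlinarith) (Real.sqrt_nonneg _))
  have hexpo : -(((k + 1 : ℕ) : ℝ) - 1) / 2 = -(k : ℝ) / 2 := by push_cast; ring
  have hε_le : ε ≤ ε ^ (-(k : ℝ) / 2) := by
    simpa using Real.rpow_le_rpow_of_exponent_ge hε hε₁
      (show -(k : ℝ) / 2 ≤ 1 by linarith [k.cast_nonneg (α := ℝ)])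
  have hM : 0 ≤ C₀ * ε ^ (-(k : ℝ) / 2) := by positivity
  rw [hexpo] at h₁ h₂
  rw [iteratedDeriv_fun_add ((hqbar.add hq₁).contDiffAt) hq₂.contDiffAt,
    iteratedDeriv_fun_add hqbar.contDiffAt hq₁.contDiffAt]
  have e₁ := mul_le_mul_of_nonneg_left (hexp t ht.1) hM
  have e₂ := mul_le_mul_of_nonneg_left (hexp (1 - t) (sub_nonneg.mpr ht.2)) hM
  have e₀ := mul_le_mul_of_nonneg_left hε_le hC₀
  linarith [abs_add_three (iteratedDeriv (k + 1) qbar t) (iteratedDeriv (k + 1) q₁ t)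
    (iteratedDeriv (k + 1) q₂ t)]

theorem rpow_neg_half_mul_sqrt_pow_succ {ε : ℝ} (hε : 0 < ε) (k : ℕ) :
    ε ^ (-(k : ℝ) / 2) * √ε ^ (k + 1) = √ε := by
  rw [Real.sqrt_eq_rpow, ← Real.rpow_natCast, ← Real.rpow_mul hε.le, ← Real.rpow_add hε]
  congr 1
  push_cast
  ring

theorem projection_error_q_Linfty_layer_region_general
    (k : ℕ) (β σ C₀ C₁ : ℝ)
    (hβ : 0 < β) (hσ : (k : ℝ) + 1 ≤ σ) (hC₀ : 0 < C₀) :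
    ∃ C : ℝ, 0 < C ∧
      ∀ (N : ℕ) (ε τ : ℝ) (x : ℕ → ℝ) (q qbar q1 q2 Pq : ℝ → ℝ),
        4 ≤ N → 4 ∣ N → 0 < ε → ε ≤ 1 → ε ≤ C₁ / N →
        τ = σ * Real.sqrt ε * Real.log N / β → τ ≤ 1 / 4 →
        (∀ i : ℕ, i ≤ N → x i =
          if i ≤ N / 4 then 4 * (σ * Real.sqrt ε / β) * ((i : ℝ) / N) * Real.log N
          else if i ≤ 3 * N / 4 then τ + 2 * (1 - 2 * τ) * ((i : ℝ) / N - 1 / 4)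
          else 1 - 4 * (σ * Real.sqrt ε / β) * (1 - (i : ℝ) / N) * Real.log N) →
        ContDiff ℝ ((k + 1 : ℕ) : ℕ∞) qbar →
        ContDiff ℝ ((k + 1 : ℕ) : ℕ∞) q1 →
        ContDiff ℝ ((k + 1 : ℕ) : ℕ∞) q2 →
        (∀ t ∈ Set.Icc (0 : ℝ) 1, q t = qbar t + q1 t + q2 t) →
        (∀ i : ℕ, i ≤ k + 1 → ∀ t ∈ Set.Icc (0 : ℝ) 1,
          |iteratedDeriv i qbar t| ≤ C₀ * ε) →
        (∀ i : ℕ, i ≤ k + 1 → ∀ t ∈ Set.Icc (0 : ℝ) 1,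
          |iteratedDeriv i q1 t| ≤
            C₀ * ε ^ (-((i : ℝ) - 1) / 2) * Real.exp (-β * t / Real.sqrt ε)) →
        (∀ i : ℕ, i ≤ k + 1 → ∀ t ∈ Set.Icc (0 : ℝ) 1,
          |iteratedDeriv i q2 t| ≤
            C₀ * ε ^ (-((i : ℝ) - 1) / 2) * Real.exp (-β * (1 - t) / Real.sqrt ε)) →
        (∀ i : ℕ, 1 ≤ i → i ≤ N →
          ∃ p : Polynomial ℝ, p.degree ≤ (k : WithBot ℕ) ∧
            (∀ t ∈ Set.Ioo (x (i - 1)) (x i), Pq t = p.eval t) ∧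
            (if i = 1 then
              -- local L² projection π on the first cell
              (∀ v : Polynomial ℝ, v.degree ≤ (k : WithBot ℕ) →
                ∫ t in x (i - 1)..x i, p.eval t * v.eval t =
                  ∫ t in x (i - 1)..x i, q t * v.eval t)
            else
              -- Gauß–Radau projection π⁺ on the remaining cells
              (∀ v : Polynomial ℝ, v.degree ≤ ((k - 1 : ℕ) : WithBot ℕ) →
                ∫ t in x (i - 1)..x i, p.eval t * v.eval t =
                  ∫ t in x (i - 1)..x i, q t * v.eval t) ∧
              p.eval (x (i - 1)) = q (x (i - 1)))) →
        ∀ i : ℕ, (1 ≤ i ∧ i ≤ N / 4) ∨ (3 * N / 4 + 1 ≤ i ∧ i ≤ N) →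
          ∀ t ∈ Set.Ioo (x (i - 1)) (x i),
            |q t - Pq t| ≤
              C * Real.sqrt ε * ((N : ℝ)⁻¹ * Real.log N) ^ (k + 1) := by
  obtain ⟨K, hK, hcellError⟩ := exists_abs_sub_eval_le_of_isL2Projection_or_isRadauProjection k
  have hσ₀ : 0 < σ := by linarith [k.cast_nonneg (α := ℝ)]
  refine ⟨K * (3 * C₀) * (4 * σ / β) ^ (k + 1), by positivity, ?_⟩
  intro N ε τ x q qbar q₁ q₂ Pq hN₄ hN hε hε₁ _ hτ hτ₄ hx hqbar hq₁ hq₂ hq hbar h₁ h₂ hproj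
    i hi t ht
  push_cast at hqbar hq₁ hq₂
  obtain ⟨hxi, hx₀, hx₁⟩ := shishkinNode_layer_cell (by omega) hN (by positivity)
    (by rw [hτ]; ring) hτ₄ hx hi
  have hab : x (i - 1) < x i := by
    have : 0 < Real.log N := Real.log_pos (by exact_mod_cast (by omega : 1 < N))
    rw [hxi, lt_add_iff_pos_right]
    positivity
  have hcell : Icc (x (i - 1)) (x i) ⊆ Icc 0 1 := Icc_subset_Icc hx₀ hx₁
  obtain ⟨p, hpdeg, hPq, hcond⟩ := hproj i (by omega) (by omega)
  have hp : IsL2Projection k q (x (i - 1)) (x i) p ∨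
      IsRadauProjection k q (x (i - 1)) (x i) p := by
    split_ifs at hcond
    · exact .inl ⟨hpdeg, hcond⟩
    · exact .inr ⟨hpdeg, fun v hv => hcond.1 v (degree_le_natCast_sub_one_of_degree_lt hv),
        hcond.2⟩
  have hqF : EqOn q (fun t => qbar t + q₁ t + q₂ t) (uIcc (x (i - 1)) (x i)) := fun t ht =>
    hq t (hcell (by rwa [uIcc_of_le hab.le] at ht))
  have herr := hcellError _ ((hqbar.add hq₁).add hq₂) _ _ _ hab
    (fun t ht => abs_iteratedDeriv_succ_le_of_layer_bounds hε hε₁ hβ.le hC₀.le hqbar hq₁ hq₂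
      (hcell ht) (hbar _ le_rfl _ (hcell ht)) (h₁ _ le_rfl _ (hcell ht))
      (h₂ _ le_rfl _ (hcell ht)))
    p (hp.imp (·.congr hqF) (·.congr hqF)) t (Ioo_subset_Icc_self ht)
  rw [hq t (hcell (Ioo_subset_Icc_self ht)), hPq t ht]
  refine herr.trans_eq ?_
  rw [hxi, add_sub_cancel_left]
  calc _ = K * (3 * C₀) * (4 * σ / β) ^ (k + 1) * (ε ^ (-(k : ℝ) / 2) * √ε ^ (k + 1)) *
          ((N : ℝ)⁻¹ * Real.log N) ^ (k + 1) := by ring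
    _ = _ := by rw [rpow_neg_half_mul_sqrt_pow_succ hε]

theorem projection_error_q_Linfty_layer_region
    (k : ℕ) (hk : 1 ≤ k) (β σ C₀ C₁ : ℝ)
    (hβ : 0 < β) (hσ : (k : ℝ) + 1 ≤ σ) (hC₀ : 0 < C₀) (hC₁ : 0 < C₁) :
    ∃ C : ℝ, 0 < C ∧
      ∀ (N : ℕ) (ε τ : ℝ) (x : ℕ → ℝ) (q qbar q1 q2 Pq : ℝ → ℝ),
        4 ≤ N → 4 ∣ N → 0 < ε → ε ≤ 1 → ε ≤ C₁ / N →
        τ = σ * Real.sqrt ε * Real.log N / β → τ ≤ 1 / 4 →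
        (∀ i : ℕ, i ≤ N → x i =
          if i ≤ N / 4 then 4 * (σ * Real.sqrt ε / β) * ((i : ℝ) / N) * Real.log N
          else if i ≤ 3 * N / 4 then τ + 2 * (1 - 2 * τ) * ((i : ℝ) / N - 1 / 4)
          else 1 - 4 * (σ * Real.sqrt ε / β) * (1 - (i : ℝ) / N) * Real.log N) →
        ContDiff ℝ ((k + 1 : ℕ) : ℕ∞) qbar →
        ContDiff ℝ ((k + 1 : ℕ) : ℕ∞) q1 →
        ContDiff ℝ ((k + 1 : ℕ) : ℕ∞) q2 →
        (∀ t ∈ Set.Icc (0 : ℝ) 1, q t = qbar t + q1 t + q2 t) →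
        (∀ i : ℕ, i ≤ k + 1 → ∀ t ∈ Set.Icc (0 : ℝ) 1,
          |iteratedDeriv i qbar t| ≤ C₀ * ε) →
        (∀ i : ℕ, i ≤ k + 1 → ∀ t ∈ Set.Icc (0 : ℝ) 1,
          |iteratedDeriv i q1 t| ≤
            C₀ * ε ^ (-((i : ℝ) - 1) / 2) * Real.exp (-β * t / Real.sqrt ε)) →
        (∀ i : ℕ, i ≤ k + 1 → ∀ t ∈ Set.Icc (0 : ℝ) 1,
          |iteratedDeriv i q2 t| ≤
            C₀ * ε ^ (-((i : ℝ) - 1) / 2) * Real.exp (-β * (1 - t) / Real.sqrt ε)) →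
        (∀ i : ℕ, 1 ≤ i → i ≤ N →
          ∃ p : Polynomial ℝ, p.degree ≤ (k : WithBot ℕ) ∧
            (∀ t ∈ Set.Ioo (x (i - 1)) (x i), Pq t = p.eval t) ∧
            (if i = 1 then
              -- local L² projection π on the first cell
              (∀ v : Polynomial ℝ, v.degree ≤ (k : WithBot ℕ) →
                ∫ t in x (i - 1)..x i, p.eval t * v.eval t =
                  ∫ t in x (i - 1)..x i, q t * v.eval t)
            else
              -- Gauß–Radau projection π⁺ on the remaining cells
              (∀ v : Polynomial ℝ, v.degree ≤ ((k - 1 : ℕ) : WithBot ℕ) →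
                ∫ t in x (i - 1)..x i, p.eval t * v.eval t =
                  ∫ t in x (i - 1)..x i, q t * v.eval t) ∧
              p.eval (x (i - 1)) = q (x (i - 1)))) →
        ∀ i : ℕ, (1 ≤ i ∧ i ≤ N / 4) ∨ (3 * N / 4 + 1 ≤ i ∧ i ≤ N) →
          ∀ t ∈ Set.Ioo (x (i - 1)) (x i),
            |q t - Pq t| ≤
              C * Real.sqrt ε * ((N : ℝ)⁻¹ * Real.log N) ^ (k + 1) :=
  projection_error_q_Linfty_layer_region_general k β σ C₀ C₁ hβ hσ hC₀
end

section
/- There exists a constant C > 0 depending only on C₀, C₁, β, σ and k (independent of ε and N) such that ‖q - P_N⁺ q‖_{L∞(I_i)} ≤ C (ε N^{-(k+1)} + ε^{1/2} N^{-σ}) for every i ∈ {N/4+1, …, 3N/4}. -/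
/-!
On a coarse cell `[a, b] ⊆ [τ, 1 - τ]` of width at most `2 / N`, the Gauß–Radau projection
reproduces polynomials of degree `≤ k` and is stable in `L∞` with a constant `K` depending
only on `k`: its defining functionals (moments against degree `< k` and the value at `a`) are
unisolvent on polynomials of degree `≤ k`, and the affine map of the cell onto `[0, 1]` makes
the constant independent of the cell. Hence `|q - π⁺ q| ≤ (1 + K) ‖q - T‖` for every such
polynomial `T`. Taking for `T` the Taylor polynomial of the smooth part `q̄` costs
`C₀ ε (2 / N)^(k+1)`, while each layer part is at most `C₀ √ε e^(-β τ / √ε) = C₀ √ε N^(-σ)`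
because the cell keeps distance `τ` from both ends of `[0, 1]`.
-/

open Set Polynomial intervalIntegral Real
open scoped Nat

noncomputable def taylorPolynomial (n : ℕ) (f : ℝ → ℝ) (a : ℝ) : ℝ[X] :=
  ∑ j ∈ Finset.range (n + 1), C (iteratedDeriv j f a / j !) * (X - C a) ^ j

theorem natDegree_taylorPolynomial_le (n : ℕ) (f : ℝ → ℝ) (a : ℝ) :
    (taylorPolynomial n f a).natDegree ≤ n :=
  natDegree_sum_le_of_forall_le _ _ fun j hj => (natDegree_C_mul_le _ _).trans <| by
    rw [natDegree_pow, natDegree_X_sub_C, mul_one]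
    exact Nat.le_of_lt_succ (Finset.mem_range.mp hj)

theorem eval_taylorPolynomial_self (n : ℕ) (f : ℝ → ℝ) (a : ℝ) :
    (taylorPolynomial n f a).eval a = f a := by
  simp [taylorPolynomial, eval_finsetSum, Finset.sum_range_succ']

theorem taylorWithinEval_Icc_eq_eval_taylorPolynomial {n : ℕ} {f : ℝ → ℝ}
    (hf : ContDiff ℝ n f) {a t : ℝ} (hat : a < t) :
    taylorWithinEval f n (Icc a t) a t = (taylorPolynomial n f a).eval t := by
  rw [taylor_within_apply, taylorPolynomial, eval_finsetSum]
  refine Finset.sum_congr rfl fun j hj => ?_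
  have hjn : (j : WithTop ℕ∞) ≤ n := mod_cast Nat.le_of_lt_succ (Finset.mem_range.mp hj)
  rw [iteratedDerivWithin_eq_iteratedDeriv (uniqueDiffOn_Icc hat) (hf.of_le hjn).contDiffAt
    ⟨le_rfl, hat.le⟩]
  simp only [smul_eq_mul, eval_mul, eval_C, eval_pow, eval_sub, eval_X]
  ring

theorem abs_sub_eval_taylorPolynomial_le {n : ℕ} {f : ℝ → ℝ} (hf : ContDiff ℝ (n + 1) f)
    {a t D : ℝ} (hat : a ≤ t) (hD : ∀ s ∈ Icc a t, |iteratedDeriv (n + 1) f s| ≤ D) :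
    |f t - (taylorPolynomial n f a).eval t| ≤ D * (t - a) ^ (n + 1) / (n + 1)! := by
  rcases hat.eq_or_lt with rfl | hat
  · simp [eval_taylorPolynomial_self]
  obtain ⟨s, hs, hrem⟩ := taylor_mean_remainder_lagrange_iteratedDeriv hat.ne hf.contDiffOn
  rw [uIcc_of_le hat.le, taylorWithinEval_Icc_eq_eval_taylorPolynomial hf.of_succ hat] at hrem
  rw [uIoo_of_le hat.le] at hs
  rw [hrem, abs_div, abs_mul, abs_pow, abs_of_pos (sub_pos.mpr hat), Nat.abs_cast]
  gcongr
  exact hD s (Ioo_subset_Icc_self hs)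

noncomputable def gaussRadauFunctionals (k : ℕ) : ℝ[X] →ₗ[ℝ] Fin (k + 1) → ℝ where
  toFun P j := if (j : ℕ) < k then ∫ s in (0 : ℝ)..1, P.eval s * s ^ (j : ℕ) else P.eval 0
  map_add' P Q := by
    ext j
    split_ifs
    · simp only [eval_add, add_mul, Pi.add_apply, if_pos, *]
      exact integral_add (Continuous.intervalIntegrable (by fun_prop) _ _)
        (Continuous.intervalIntegrable (by fun_prop) _ _)
    · simp [*]
  map_smul' c P := by
    ext j
    split_ifs <;> simp [*, mul_assoc, integral_const_mul]

theorem integral_eval_mul_eq_zero_of_gaussRadauFunctionals {k : ℕ} {P : ℝ[X]}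
    (hP : ∀ j : Fin (k + 1), (j : ℕ) < k → gaussRadauFunctionals k P j = 0)
    {v : ℝ[X]} (hv : v.natDegree < k) :
    ∫ s in (0 : ℝ)..1, P.eval s * v.eval s = 0 := by
  have hmom : ∀ j < k, ∫ s in (0 : ℝ)..1, P.eval s * s ^ j = 0 := fun j hj => by
    simpa [gaussRadauFunctionals, hj] using hP ⟨j, by omega⟩ hj
  simp_rw [eval_eq_sum_range' hv, Finset.mul_sum]
  rw [integral_finsetSum fun j _ => Continuous.intervalIntegrable (by fun_prop) _ _]
  refine Finset.sum_eq_zero fun j hj => ?_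
  simp_rw [mul_left_comm _ (v.coeff j)]
  rw [integral_const_mul, hmom j (Finset.mem_range.mp hj), mul_zero]

theorem eq_zero_of_gaussRadauFunctionals_eq_zero {k : ℕ} {P : ℝ[X]} (hP : P.natDegree ≤ k)
    (h : gaussRadauFunctionals k P = 0) : P = 0 := by
  have heval : P.eval 0 = 0 := by
    simpa [gaussRadauFunctionals] using congr_fun h (Fin.last k)
  obtain ⟨d, rfl⟩ : X ∣ P := X_dvd_iff.mpr (by rwa [coeff_zero_eq_eval_zero])
  by_contra hXd
  have hd : d ≠ 0 := right_ne_zero_of_mul hXd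
  have hdeg : d.natDegree < k := by rw [natDegree_X_mul hd] at hP; omega
  -- `∫₀¹ s d(s)² = ∫₀¹ P d` vanishes, yet its integrand is nonnegative and not identically 0
  have hzero : ∫ s in (0 : ℝ)..1, (X * d).eval s * d.eval s = 0 :=
    integral_eval_mul_eq_zero_of_gaussRadauFunctionals (fun j _ => congr_fun h j) hdeg
  obtain ⟨c, hc, hdc⟩ : ∃ c ∈ Ioo (0 : ℝ) 1, d.eval c ≠ 0 := by
    by_contra! hroots
    exact hd (eq_zero_of_infinite_isRoot d ((Ioo_infinite zero_lt_one).mono hroots))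
  refine hzero.not_gt (integral_pos zero_lt_one (by fun_prop) (fun s hs => ?_)
    ⟨c, Ioo_subset_Icc_self hc, ?_⟩)
  · simpa [mul_assoc] using mul_nonneg hs.1.le (mul_self_nonneg (d.eval s))
  · simpa [mul_assoc] using mul_pos hc.1 (mul_self_pos.mpr hdc)

theorem mem_degreeLT_succ_iff_natDegree_le {R : Type*} [Semiring R] {n : ℕ} {p : R[X]} :
    p ∈ degreeLT R (n + 1) ↔ p.natDegree ≤ n := by
  rw [degreeLT_succ_eq_degreeLE, mem_degreeLE, natDegree_le_iff_degree_le]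

theorem exists_abs_eval_le_norm_gaussRadauFunctionals (k : ℕ) :
    ∃ K : ℝ, 0 ≤ K ∧ ∀ P : ℝ[X], P.natDegree ≤ k → ∀ s ∈ Icc (0 : ℝ) 1,
      |P.eval s| ≤ K * ‖gaussRadauFunctionals k P‖ := by
  set L : (Fin (k + 1) → ℝ) →ₗ[ℝ] Fin (k + 1) → ℝ := gaussRadauFunctionals k ∘ₗ
    (degreeLT ℝ (k + 1)).subtype ∘ₗ (degreeLTEquiv ℝ (k + 1)).symm.toLinearMap
  have hL : Function.Injective L := by
    rw [← LinearMap.ker_eq_bot, LinearMap.ker_eq_bot']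
    intro c hc
    have hdeg := mem_degreeLT_succ_iff_natDegree_le.mp ((degreeLTEquiv ℝ (k + 1)).symm c).2
    exact (LinearEquiv.map_eq_zero_iff _).mp
      (Subtype.ext (eq_zero_of_gaussRadauFunctionals_eq_zero hdeg hc))
  obtain ⟨K, -, hK⟩ := L.injective_iff_antilipschitz.mp hL
  refine ⟨(k + 1) * K, by positivity, fun P hP s hs => ?_⟩
  have hmem : P ∈ degreeLT ℝ (k + 1) := mem_degreeLT_succ_iff_natDegree_le.mpr hP
  set c := degreeLTEquiv ℝ (k + 1) ⟨P, hmem⟩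
  have hLc : L c = gaussRadauFunctionals k P := by simp [L, c]
  have hc : ‖c‖ ≤ K * ‖gaussRadauFunctionals k P‖ :=
    hLc ▸ ZeroHomClass.bound_of_antilipschitz L hK c
  calc |P.eval s| = |∑ m, c m * s ^ (m : ℕ)| := by rw [eval_eq_sum_degreeLTEquiv hmem]
    _ ≤ ∑ m : Fin (k + 1), ‖c‖ := by
      refine (Finset.abs_sum_le_sum_abs _ _).trans (Finset.sum_le_sum fun m _ => ?_)
      rw [abs_mul, abs_pow, abs_of_nonneg hs.1]
      exact (mul_le_of_le_one_right (abs_nonneg _) (pow_le_one₀ hs.1 hs.2)).trans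
        (norm_le_pi_norm c m)
    _ ≤ (k + 1) * K * ‖gaussRadauFunctionals k P‖ := by
      rw [Finset.sum_const, Finset.card_univ, Fintype.card_fin, nsmul_eq_mul, mul_assoc]
      push_cast
      gcongr

theorem integral_eval_comp_affine_mul_pow {a b : ℝ} (hab : a < b) (P : ℝ[X]) (j : ℕ) :
    ∫ s in (0 : ℝ)..1, (P.comp (C (b - a) * X + C a)).eval s * s ^ j =
      (b - a)⁻¹ * ∫ t in a..b, P.eval t * ((C (b - a)⁻¹ * (X - C a)) ^ j).eval t := by
  have hba : b - a ≠ 0 := (sub_pos.mpr hab).ne'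
  have := integral_comp_mul_add (a := 0) (b := 1)
    (fun t => P.eval t * ((C (b - a)⁻¹ * (X - C a)) ^ j).eval t) hba a
  simp only [mul_zero, zero_add, mul_one, sub_add_cancel, smul_eq_mul] at this
  rw [← this]
  congr 1; ext s
  simp [inv_mul_cancel_left₀ hba]

theorem exists_gaussRadau_stability (k : ℕ) :
    ∃ K : ℝ, 0 ≤ K ∧ ∀ {a b : ℝ}, a < b → ∀ {P : ℝ[X]} {w : ℝ → ℝ} {B : ℝ},
      P.natDegree ≤ k → (∀ v : ℝ[X], v.natDegree < k →
        ∫ t in a..b, P.eval t * v.eval t = ∫ t in a..b, w t * v.eval t) →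
      P.eval a = w a → (∀ t ∈ Icc a b, |w t| ≤ B) →
      ∀ t ∈ Icc a b, |P.eval t| ≤ K * B := by
  obtain ⟨K, hK0, hK⟩ := exists_abs_eval_le_norm_gaussRadauFunctionals k
  refine ⟨K, hK0, fun {a b} hab {P w B} hP hmom hend hw t ht => ?_⟩
  have hba : 0 < b - a := sub_pos.mpr hab
  have hB : 0 ≤ B := (abs_nonneg _).trans (hw a (left_mem_Icc.mpr hab.le))
  set Q := P.comp (C (b - a) * X + C a)
  have hQ : Q.natDegree ≤ k := by
    rwa [natDegree_comp, natDegree_linear hba.ne', mul_one]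
  have hQB : ‖gaussRadauFunctionals k Q‖ ≤ B := by
    refine (pi_norm_le_iff_of_nonneg hB).mpr fun j => ?_
    simp only [gaussRadauFunctionals, LinearMap.coe_mk, AddHom.coe_mk, Real.norm_eq_abs]
    split_ifs with hj
    · set v := (C (b - a)⁻¹ * (X - C a)) ^ (j : ℕ)
      have hv : v.natDegree < k := (natDegree_pow_le_of_le _
        ((natDegree_C_mul_le _ _).trans (natDegree_X_sub_C_le a))).trans_lt (by omega)
      have hv1 : ∀ t ∈ uIoc a b, ‖w t * v.eval t‖ ≤ B := fun t ht => by
        rw [uIoc_of_le hab.le] at ht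
        have h0 : 0 ≤ (b - a)⁻¹ * (t - a) := by have := ht.1; positivity
        have h1 : (b - a)⁻¹ * (t - a) ≤ 1 := by
          rw [inv_mul_le_one₀ hba]; linarith [ht.2]
        simp only [v, eval_pow, eval_mul, eval_C, eval_sub, eval_X, norm_mul, Real.norm_eq_abs,
          abs_pow, abs_of_nonneg h0]
        exact (mul_le_of_le_one_right (abs_nonneg _) (pow_le_one₀ h0 h1)).trans
          (hw t (Ioc_subset_Icc_self ht))
      rw [integral_eval_comp_affine_mul_pow hab, hmom v hv, abs_mul, abs_inv, abs_of_pos hba,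
        inv_mul_le_iff₀ hba, mul_comm, ← abs_of_pos hba]
      exact norm_integral_le_of_norm_le_const hv1
    · simpa [Q, hend] using hw a (left_mem_Icc.mpr hab.le)
  have hs : (t - a) / (b - a) ∈ Icc (0 : ℝ) 1 :=
    ⟨div_nonneg (by linarith [ht.1]) hba.le, (div_le_one hba).mpr (by linarith [ht.2])⟩
  calc |P.eval t| = |Q.eval ((t - a) / (b - a))| := by simp [Q, mul_div_cancel₀ _ hba.ne']
    _ ≤ K * ‖gaussRadauFunctionals k Q‖ := hK Q hQ _ hs
    _ ≤ K * B := by gcongr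

theorem exists_gaussRadau_quasiOptimal (k : ℕ) :
    ∃ K : ℝ, 0 ≤ K ∧ ∀ {a b : ℝ}, a < b → ∀ {q : ℝ → ℝ} {p T : ℝ[X]} {B : ℝ},
      ContinuousOn q (Icc a b) → p.natDegree ≤ k →
      (∀ v : ℝ[X], v.natDegree < k →
        ∫ t in a..b, p.eval t * v.eval t = ∫ t in a..b, q t * v.eval t) →
      p.eval a = q a → T.natDegree ≤ k → (∀ t ∈ Icc a b, |q t - T.eval t| ≤ B) →
      ∀ t ∈ Icc a b, |q t - p.eval t| ≤ (1 + K) * B := by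
  obtain ⟨K, hK0, hK⟩ := exists_gaussRadau_stability k
  refine ⟨K, hK0, fun {a b} hab {q p T B} hq hp hmom hend hT hB t ht => ?_⟩
  have hpT : (p - T).natDegree ≤ k := (natDegree_sub_le p T).trans (max_le hp hT)
  have hmom' : ∀ v : ℝ[X], v.natDegree < k →
      ∫ t in a..b, (p - T).eval t * v.eval t = ∫ t in a..b, (q t - T.eval t) * v.eval t := by
    intro v hv
    have hTv : IntervalIntegrable (fun t => T.eval t * v.eval t) MeasureTheory.volume a b :=
      Continuous.intervalIntegrable (by fun_prop) _ _
    have hqv : IntervalIntegrable (fun t => q t * v.eval t) MeasureTheory.volume a b :=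
      (hq.mul v.continuous.continuousOn).intervalIntegrable_of_Icc hab.le
    simp only [eval_sub, sub_mul]
    rw [integral_sub (Continuous.intervalIntegrable (by fun_prop) _ _) hTv, integral_sub hqv hTv,
      hmom v hv]
  have hstab := hK hab hpT hmom' (by rw [eval_sub, hend]) hB t ht
  calc |q t - p.eval t| = |(q t - T.eval t) - (p - T).eval t| := by rw [eval_sub]; ring_nf
    _ ≤ B + K * B := (abs_sub _ _).trans (add_le_add (hB t ht) hstab)
    _ = (1 + K) * B := by ring

theorem shishkinMesh_coarse_eq {N : ℕ} {σ ε β τ : ℝ} {x : ℕ → ℝ} (hN : 0 < N)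
    (hNdvd : 4 ∣ N) (hτ : τ = σ * √ε * log N / β)
    (hx : ∀ i : ℕ, i ≤ N → x i =
      if i ≤ N / 4 then 4 * (σ * √ε / β) * ((i : ℝ) / N) * log N
      else if i ≤ 3 * N / 4 then τ + 2 * (1 - 2 * τ) * ((i : ℝ) / N - 1 / 4)
      else 1 - 4 * (σ * √ε / β) * (1 - (i : ℝ) / N) * log N) :
    ∀ j : ℕ, N / 4 ≤ j → j ≤ 3 * N / 4 →
      x j = τ + 2 * (1 - 2 * τ) * ((j : ℝ) / N - 1 / 4) := by
  intro j hj1 hj2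
  rw [hx j (by omega)]
  split_ifs with hj
  · obtain rfl : j = N / 4 := le_antisymm hj hj1
    have hN' : (N : ℝ) ≠ 0 := by positivity
    rw [Nat.cast_div hNdvd (by norm_num), hτ]
    field_simp
    ring
  · rfl

theorem shishkinMesh_coarse_cell {N : ℕ} {τ : ℝ} {x : ℕ → ℝ} (hN : 0 < N) (hNdvd : 4 ∣ N)
    (hτ0 : 0 ≤ τ) (hτ : τ ≤ 1 / 4)
    (hx : ∀ j : ℕ, N / 4 ≤ j → j ≤ 3 * N / 4 →
      x j = τ + 2 * (1 - 2 * τ) * ((j : ℝ) / N - 1 / 4))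
    {i : ℕ} (hi1 : N / 4 + 1 ≤ i) (hi2 : i ≤ 3 * N / 4) :
    τ ≤ x (i - 1) ∧ x (i - 1) < x i ∧ x i ≤ 1 - τ ∧ x i - x (i - 1) ≤ 2 / N := by
  have hN' : (0 : ℝ) < N := by exact_mod_cast hN
  have hlo : (N : ℝ) ≤ 4 * ((i - 1 : ℕ) : ℝ) := mod_cast (by omega : N ≤ 4 * (i - 1))
  rw [Nat.cast_sub (by omega : 1 ≤ i), Nat.cast_one] at hlo
  have hhi : 4 * (i : ℝ) ≤ 3 * N := mod_cast (by omega : 4 * i ≤ 3 * N)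
  rw [hx (i - 1) (by omega) (by omega), hx i (by omega) hi2, Nat.cast_sub (by omega : 1 ≤ i),
    Nat.cast_one]
  have hwidth : τ + 2 * (1 - 2 * τ) * ((i : ℝ) / N - 1 / 4)
      - (τ + 2 * (1 - 2 * τ) * (((i : ℝ) - 1) / N - 1 / 4)) = 2 * (1 - 2 * τ) / N := by
    field_simp; ring
  refine ⟨?_, ?_, ?_, ?_⟩
  · have : 0 ≤ ((i : ℝ) - 1) / N - 1 / 4 := by
      rw [sub_nonneg, le_div_iff₀ hN']; linarith
    nlinarith
  · have : 0 < 2 * (1 - 2 * τ) / N := by apply div_pos <;> linarith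
    linarith
  · have : (i : ℝ) / N - 1 / 4 ≤ 1 / 2 := by
      rw [sub_le_iff_le_add, div_le_iff₀ hN']; linarith
    nlinarith
  · rw [hwidth]
    gcongr
    linarith

theorem exp_neg_div_sqrt_le_rpow {β σ ε τ u N : ℝ} (hβ : 0 < β) (hε : 0 < ε) (hN : 0 < N)
    (hτ : τ = σ * √ε * log N / β) (hu : τ ≤ u) :
    exp (-β * u / √ε) ≤ N ^ (-σ) := by
  have hsε : 0 < √ε := sqrt_pos.mpr hε
  rw [rpow_def_of_pos hN, exp_le_exp, div_le_iff₀ hsε]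
  have : σ * √ε * log N = β * τ := by rw [hτ]; field_simp
  nlinarith

theorem abs_sub_eval_taylorPolynomial_le_of_decomposition {k : ℕ} {β σ C₀ ε τ N a b : ℝ}
    {q qbar q1 q2 : ℝ → ℝ} (hβ : 0 < β) (hC₀ : 0 ≤ C₀) (hε : 0 < ε) (hN : 0 < N)
    (hτ : τ = σ * √ε * log N / β) (hτ0 : 0 ≤ τ) (haτ : τ ≤ a) (hbτ : b ≤ 1 - τ)
    (hqbar : ContDiff ℝ (k + 1) qbar) (hq : ∀ t ∈ Icc (0 : ℝ) 1, q t = qbar t + q1 t + q2 t)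
    (hqbarB : ∀ t ∈ Icc (0 : ℝ) 1, |iteratedDeriv (k + 1) qbar t| ≤ C₀ * ε)
    (hq1B : ∀ t ∈ Icc (0 : ℝ) 1, |q1 t| ≤ C₀ * √ε * exp (-β * t / √ε))
    (hq2B : ∀ t ∈ Icc (0 : ℝ) 1, |q2 t| ≤ C₀ * √ε * exp (-β * (1 - t) / √ε)) :
    ∀ t ∈ Icc a b, |q t - (taylorPolynomial k qbar a).eval t| ≤
      C₀ * ε * (b - a) ^ (k + 1) + 2 * (C₀ * √ε * N ^ (-σ)) := by
  intro t ht
  have hsub : Icc a b ⊆ Icc (0 : ℝ) 1 := Icc_subset_Icc (by linarith) (by linarith)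
  have ht01 := hsub ht
  have hsmooth : |qbar t - (taylorPolynomial k qbar a).eval t| ≤ C₀ * ε * (b - a) ^ (k + 1) := by
    have hta : 0 ≤ t - a := sub_nonneg.mpr ht.1
    calc _ ≤ C₀ * ε * (t - a) ^ (k + 1) / (k + 1)! :=
          abs_sub_eval_taylorPolynomial_le hqbar ht.1
            fun s hs => hqbarB s (hsub ⟨hs.1, hs.2.trans ht.2⟩)
      _ ≤ C₀ * ε * (t - a) ^ (k + 1) :=
          div_le_self (by positivity) (mod_cast (k + 1).factorial_pos)
      _ ≤ C₀ * ε * (b - a) ^ (k + 1) := by gcongr; linarith [ht.2]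
  have hlayer1 : |q1 t| ≤ C₀ * √ε * N ^ (-σ) := (hq1B t ht01).trans <| by
    gcongr; exact exp_neg_div_sqrt_le_rpow hβ hε hN hτ (haτ.trans ht.1)
  have hlayer2 : |q2 t| ≤ C₀ * √ε * N ^ (-σ) := (hq2B t ht01).trans <| by
    gcongr; exact exp_neg_div_sqrt_le_rpow hβ hε hN hτ (by linarith [ht.2])
  rw [hq t ht01, show qbar t + q1 t + q2 t - (taylorPolynomial k qbar a).eval t
    = (qbar t - (taylorPolynomial k qbar a).eval t) + q1 t + q2 t by ring]
  linarith [abs_add_three (qbar t - (taylorPolynomial k qbar a).eval t) (q1 t) (q2 t)]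

theorem taylor_add_layer_bound_le {k : ℕ} {C₀ ε σ h N : ℝ} (hC₀ : 0 ≤ C₀) (hε : 0 ≤ ε)
    (hN : 0 < N) (h0 : 0 ≤ h) (hh : h ≤ 2 / N) :
    C₀ * ε * h ^ (k + 1) + 2 * (C₀ * √ε * N ^ (-σ)) ≤
      (2 ^ (k + 1) * C₀ + 2 * C₀) * (ε * (N ^ (k + 1))⁻¹ + √ε * N ^ (-σ)) := by
  have hpow : h ^ (k + 1) ≤ 2 ^ (k + 1) * (N ^ (k + 1))⁻¹ := by
    rw [← div_eq_mul_inv, ← div_pow]; gcongr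
  have hX : 0 ≤ ε * (N ^ (k + 1))⁻¹ := by positivity
  have hY : 0 ≤ √ε * N ^ (-σ) := by positivity
  nlinarith [mul_le_mul_of_nonneg_left hpow (mul_nonneg hC₀ hε),
    mul_nonneg (by positivity : (0 : ℝ) ≤ 2 ^ (k + 1) * C₀) hY, mul_nonneg hC₀ hX]

theorem projection_error_q_Linfty_coarse_region_general
    (k : ℕ) (β σ C₀ C₁ : ℝ)
    (hβ : 0 < β) (hσ : (k : ℝ) + 1 ≤ σ) (hC₀ : 0 < C₀) :
    ∃ C : ℝ, 0 < C ∧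
      ∀ (N : ℕ) (ε τ : ℝ) (x : ℕ → ℝ) (q qbar q1 q2 Pq : ℝ → ℝ),
        4 ≤ N → 4 ∣ N → 0 < ε → ε ≤ 1 → ε ≤ C₁ / N →
        τ = σ * Real.sqrt ε * Real.log N / β → τ ≤ 1 / 4 →
        (∀ i : ℕ, i ≤ N → x i =
          if i ≤ N / 4 then 4 * (σ * Real.sqrt ε / β) * ((i : ℝ) / N) * Real.log N
          else if i ≤ 3 * N / 4 then τ + 2 * (1 - 2 * τ) * ((i : ℝ) / N - 1 / 4)
          else 1 - 4 * (σ * Real.sqrt ε / β) * (1 - (i : ℝ) / N) * Real.log N) →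
        ContDiff ℝ ((k + 1 : ℕ) : ℕ∞) qbar →
        ContDiff ℝ ((k + 1 : ℕ) : ℕ∞) q1 →
        ContDiff ℝ ((k + 1 : ℕ) : ℕ∞) q2 →
        (∀ t ∈ Set.Icc (0 : ℝ) 1, q t = qbar t + q1 t + q2 t) →
        (∀ i : ℕ, i ≤ k + 1 → ∀ t ∈ Set.Icc (0 : ℝ) 1,
          |iteratedDeriv i qbar t| ≤ C₀ * ε) →
        (∀ i : ℕ, i ≤ k + 1 → ∀ t ∈ Set.Icc (0 : ℝ) 1,
          |iteratedDeriv i q1 t| ≤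
            C₀ * ε ^ (-((i : ℝ) - 1) / 2) * Real.exp (-β * t / Real.sqrt ε)) →
        (∀ i : ℕ, i ≤ k + 1 → ∀ t ∈ Set.Icc (0 : ℝ) 1,
          |iteratedDeriv i q2 t| ≤
            C₀ * ε ^ (-((i : ℝ) - 1) / 2) * Real.exp (-β * (1 - t) / Real.sqrt ε)) →
        (∀ i : ℕ, 1 ≤ i → i ≤ N →
          ∃ p : Polynomial ℝ, p.degree ≤ (k : WithBot ℕ) ∧
            (∀ t ∈ Set.Ioo (x (i - 1)) (x i), Pq t = p.eval t) ∧
            (if i = 1 then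
              -- local L² projection π on the first cell
              (∀ v : Polynomial ℝ, v.degree ≤ (k : WithBot ℕ) →
                ∫ t in x (i - 1)..x i, p.eval t * v.eval t =
                  ∫ t in x (i - 1)..x i, q t * v.eval t)
            else
              -- Gauß–Radau projection π⁺ on the remaining cells
              (∀ v : Polynomial ℝ, v.degree ≤ ((k - 1 : ℕ) : WithBot ℕ) →
                ∫ t in x (i - 1)..x i, p.eval t * v.eval t =
                  ∫ t in x (i - 1)..x i, q t * v.eval t) ∧
              p.eval (x (i - 1)) = q (x (i - 1)))) →
        ∀ i : ℕ, N / 4 + 1 ≤ i → i ≤ 3 * N / 4 →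
          ∀ t ∈ Set.Ioo (x (i - 1)) (x i),
            |q t - Pq t| ≤
              C * (ε * ((N : ℝ) ^ (k + 1))⁻¹ + Real.sqrt ε * (N : ℝ) ^ (-σ)) := by
  obtain ⟨K, hK0, hK⟩ := exists_gaussRadau_quasiOptimal k
  refine ⟨(1 + K) * (2 ^ (k + 1) * C₀ + 2 * C₀), by positivity, ?_⟩
  intro N ε τ x q qbar q1 q2 Pq hN4 hNdvd hε _ _ hτ hτ14 hx hqbar hq1 hq2 hq hqbarB hq1B hq2B
    hproj i hi1 hi2 t ht
  have hN : (0 : ℝ) < N := by positivity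
  have hτ0 : 0 ≤ τ := hτ ▸ div_nonneg (mul_nonneg (mul_nonneg (by linarith) (sqrt_nonneg ε))
    (log_nonneg (by exact_mod_cast (by omega : 1 ≤ N)))) hβ.le
  obtain ⟨haτ, hab, hbτ, hh⟩ := shishkinMesh_coarse_cell (by omega) hNdvd hτ0 hτ14
    (shishkinMesh_coarse_eq (by omega) hNdvd hτ hx) hi1 hi2
  obtain ⟨p, hpdeg, hPq, hp⟩ := hproj i (by omega) (by omega)
  rw [if_neg (by omega)] at hp
  have hB := abs_sub_eval_taylorPolynomial_le_of_decomposition hβ hC₀.le hε hN hτ hτ0 haτ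
    hbτ (mod_cast hqbar) hq (hqbarB (k + 1) le_rfl)
    (fun t ht => by simpa [sqrt_eq_rpow] using hq1B 0 (by omega) t ht)
    (fun t ht => by simpa [sqrt_eq_rpow] using hq2B 0 (by omega) t ht)
  have hqcont : ContinuousOn q (Icc (x (i - 1)) (x i)) :=
    (hqbar.continuous.add hq1.continuous |>.add hq2.continuous).continuousOn.congr
      fun s hs => hq s (Icc_subset_Icc (by linarith) (by linarith) hs)
  rw [hPq t ht, mul_assoc]
  exact (hK hab hqcont (natDegree_le_of_degree_le hpdeg)
    (fun v hv => hp.1 v (degree_le_of_natDegree_le (by omega))) hp.2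
    (natDegree_taylorPolynomial_le k qbar _) hB t (Ioo_subset_Icc_self ht)).trans
    (mul_le_mul_of_nonneg_left (taylor_add_layer_bound_le hC₀.le hε.le hN (sub_pos.mpr hab).le hh)
      (by positivity))

theorem projection_error_q_Linfty_coarse_region
    (k : ℕ) (hk : 1 ≤ k) (β σ C₀ C₁ : ℝ)
    (hβ : 0 < β) (hσ : (k : ℝ) + 1 ≤ σ) (hC₀ : 0 < C₀) (hC₁ : 0 < C₁) :
    ∃ C : ℝ, 0 < C ∧
      ∀ (N : ℕ) (ε τ : ℝ) (x : ℕ → ℝ) (q qbar q1 q2 Pq : ℝ → ℝ),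
        4 ≤ N → 4 ∣ N → 0 < ε → ε ≤ 1 → ε ≤ C₁ / N →
        τ = σ * Real.sqrt ε * Real.log N / β → τ ≤ 1 / 4 →
        (∀ i : ℕ, i ≤ N → x i =
          if i ≤ N / 4 then 4 * (σ * Real.sqrt ε / β) * ((i : ℝ) / N) * Real.log N
          else if i ≤ 3 * N / 4 then τ + 2 * (1 - 2 * τ) * ((i : ℝ) / N - 1 / 4)
          else 1 - 4 * (σ * Real.sqrt ε / β) * (1 - (i : ℝ) / N) * Real.log N) →
        ContDiff ℝ ((k + 1 : ℕ) : ℕ∞) qbar →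
        ContDiff ℝ ((k + 1 : ℕ) : ℕ∞) q1 →
        ContDiff ℝ ((k + 1 : ℕ) : ℕ∞) q2 →
        (∀ t ∈ Set.Icc (0 : ℝ) 1, q t = qbar t + q1 t + q2 t) →
        (∀ i : ℕ, i ≤ k + 1 → ∀ t ∈ Set.Icc (0 : ℝ) 1,
          |iteratedDeriv i qbar t| ≤ C₀ * ε) →
        (∀ i : ℕ, i ≤ k + 1 → ∀ t ∈ Set.Icc (0 : ℝ) 1,
          |iteratedDeriv i q1 t| ≤
            C₀ * ε ^ (-((i : ℝ) - 1) / 2) * Real.exp (-β * t / Real.sqrt ε)) →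
        (∀ i : ℕ, i ≤ k + 1 → ∀ t ∈ Set.Icc (0 : ℝ) 1,
          |iteratedDeriv i q2 t| ≤
            C₀ * ε ^ (-((i : ℝ) - 1) / 2) * Real.exp (-β * (1 - t) / Real.sqrt ε)) →
        (∀ i : ℕ, 1 ≤ i → i ≤ N →
          ∃ p : Polynomial ℝ, p.degree ≤ (k : WithBot ℕ) ∧
            (∀ t ∈ Set.Ioo (x (i - 1)) (x i), Pq t = p.eval t) ∧
            (if i = 1 then
              -- local L² projection π on the first cell
              (∀ v : Polynomial ℝ, v.degree ≤ (k : WithBot ℕ) →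
                ∫ t in x (i - 1)..x i, p.eval t * v.eval t =
                  ∫ t in x (i - 1)..x i, q t * v.eval t)
            else
              -- Gauß–Radau projection π⁺ on the remaining cells
              (∀ v : Polynomial ℝ, v.degree ≤ ((k - 1 : ℕ) : WithBot ℕ) →
                ∫ t in x (i - 1)..x i, p.eval t * v.eval t =
                  ∫ t in x (i - 1)..x i, q t * v.eval t) ∧
              p.eval (x (i - 1)) = q (x (i - 1)))) →
        ∀ i : ℕ, N / 4 + 1 ≤ i → i ≤ 3 * N / 4 →
          ∀ t ∈ Set.Ioo (x (i - 1)) (x i),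
            |q t - Pq t| ≤
              C * (ε * ((N : ℝ) ^ (k + 1))⁻¹ + Real.sqrt ε * (N : ℝ) ^ (-σ)) :=
  projection_error_q_Linfty_coarse_region_general k β σ C₀ C₁ hβ hσ hC₀
end

section
/- For every triple T = (U, P, Q) of functions that are H¹ on each mesh cell, the two-dimensional LDG bilinear form satisfies the exact identity B(T; T) = ε^{-1}‖P‖² + ε^{-1}‖Q‖² + (bU, U) + Σ_{j=1}^N Σ_{i∈{0,N}} ∫_{J_j} λ_{i,y}[[U]]_{i,y}² dy + Σ_{i=1}^N Σ_{j∈{0,N}} ∫_{I_i} λ_{x,j}[[U]]_{x,j}² dx + Σ_{j=1}^N ∫_{J_j} λ_P [[P]]_{3N/4,y}² dy + Σ_{i=1}^N ∫_{I_i} λ_Q [[Q]]_{x,3N/4}² dx; in particular B(T;T) = |||T|||_E². -/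
/-!
STATEMENT 18: For every triple T = (U,P,Q) of functions that are H¹ on each
mesh cell (encoded cellwise by continuous representatives `Uc i j`, `Pc i j`,
`Qc i j` that are absolutely continuous along lines with (square-)integrable
partial derivatives `Udx, Udy, Pdx, Qdy`), the two-dimensional LDG bilinear
form satisfies the exact identity B(T;T) = |||T|||_E², i.e.
  B(T;T) = ε⁻¹‖P‖² + ε⁻¹‖Q‖² + (bU,U)
    + Σ_{j=1}^N Σ_{i∈{0,N}} ∫_{J_j} λ_{i,y}[[U]]_{i,y}² dy
    + Σ_{i=1}^N Σ_{j∈{0,N}} ∫_{I_i} λ_{x,j}[[U]]_{x,j}² dx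
    + Σ_{j=1}^N ∫_{J_j} λ_P [[P]]_{3N/4,y}² dy
    + Σ_{i=1}^N ∫_{I_i} λ_Q [[Q]]_{x,3N/4}² dx,
with λ_{0,y} = λ_{N,y} = λ_{x,0} = λ_{x,N} = ε^{1/2}, λ_P = λ_Q = ε^{-1/2}.
-/

open MeasureTheory Set intervalIntegral

lemma primitive_parts {a b : ℝ} (hab : a ≤ b) (f g : ℝ → ℝ)
    (hf : IntervalIntegrable f volume a b) (hg : IntervalIntegrable g volume a b) :
    (∫ t in a..b, (∫ s in a..t, f s) * g t) + (∫ t in a..b, (∫ s in a..t, g s) * f t)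
      = (∫ s in a..b, f s) * (∫ s in a..b, g s) := by
  set μ := volume.restrict (Set.Ioc a b) with hμ
  have hfI : Integrable f μ := (intervalIntegrable_iff_integrableOn_Ioc_of_le hab).1 hf
  have hgI : Integrable g μ := (intervalIntegrable_iff_integrableOn_Ioc_of_le hab).1 hg
  have hprod : Integrable (fun p : ℝ × ℝ => f p.1 * g p.2) (μ.prod μ) :=
    hfI.mul_prod hgI
  have hK : Integrable (fun p : ℝ × ℝ => if p.1 ≤ p.2 then f p.1 * g p.2 else 0) (μ.prod μ) := by
    have hms : MeasurableSet {p : ℝ × ℝ | p.1 ≤ p.2} :=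
      measurableSet_le measurable_fst measurable_snd
    have := hprod.indicator hms
    refine this.congr ?_
    filter_upwards with p
    simp [Set.indicator_apply]
  have swap := MeasureTheory.integral_integral_swap
    (f := fun s t => if s ≤ t then f s * g t else 0)
    (μ := μ) (ν := μ) (by exact hK)
  -- RHS of swap: ∫ t, F t * g t
  have hRHS : (∫ t, ∫ s, (if s ≤ t then f s * g t else 0) ∂μ ∂μ)
      = ∫ t in a..b, (∫ s in a..t, f s) * g t := by
    rw [intervalIntegral.integral_of_le hab]
    apply MeasureTheory.setIntegral_congr_fun measurableSet_Ioc
    intro t ht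
    simp only
    have h1 : (fun s => if s ≤ t then f s * g t else 0)
        = Set.indicator (Set.Iic t) (fun s => f s * g t) := by
      ext s; simp [Set.indicator_apply]
    rw [h1, MeasureTheory.integral_indicator measurableSet_Iic, hμ,
      Measure.restrict_restrict measurableSet_Iic]
    have h2 : Set.Iic t ∩ Set.Ioc a b = Set.Ioc a t := by
      ext u
      simp only [Set.mem_inter_iff, Set.mem_Iic, Set.mem_Ioc]
      exact ⟨fun h => ⟨h.2.1, h.1⟩, fun h => ⟨h.2, h.1, h.2.trans ht.2⟩⟩
    rw [h2, ← intervalIntegral.integral_of_le ht.1.le, intervalIntegral.integral_mul_const]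
  -- LHS of swap: ∫ s, f s * (G b - G s)
  have hLHS : (∫ s, ∫ t, (if s ≤ t then f s * g t else 0) ∂μ ∂μ)
      = ∫ s in a..b, f s * ((∫ u in a..b, g u) - ∫ u in a..s, g u) := by
    rw [intervalIntegral.integral_of_le hab]
    apply MeasureTheory.setIntegral_congr_fun measurableSet_Ioc
    intro s hs
    simp only
    have h1 : (fun t => if s ≤ t then f s * g t else 0)
        = Set.indicator (Set.Ici s) (fun t => f s * g t) := by
      ext t; simp [Set.indicator_apply]
    rw [h1, MeasureTheory.integral_indicator measurableSet_Ici, hμ,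
      Measure.restrict_restrict measurableSet_Ici]
    have h2 : Set.Ici s ∩ Set.Ioc a b = Set.Icc s b := by
      ext t
      simp only [Set.mem_inter_iff, Set.mem_Ici, Set.mem_Ioc, Set.mem_Icc]
      exact ⟨fun h => ⟨h.1, h.2.2⟩, fun h => ⟨h.1, lt_of_lt_of_le hs.1 h.1, h.2⟩⟩
    rw [h2, MeasureTheory.integral_Icc_eq_integral_Ioc,
      ← intervalIntegral.integral_of_le hs.2, intervalIntegral.integral_const_mul]
    congr 1
    rw [← intervalIntegral.integral_interval_sub_left hg (hg.mono_set ?_)]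
    rw [Set.uIcc_of_le hs.1.le, Set.uIcc_of_le hab]
    exact Set.Icc_subset_Icc le_rfl hs.2
  rw [hRHS, hLHS] at swap
  -- continuity of primitives
  have hGc : ContinuousOn (fun s => ∫ u in a..s, g u) (Set.uIcc a b) :=
    intervalIntegral.continuousOn_primitive_interval' hg Set.left_mem_uIcc
  have hFc : ContinuousOn (fun s => ∫ u in a..s, f u) (Set.uIcc a b) :=
    intervalIntegral.continuousOn_primitive_interval' hf Set.left_mem_uIcc
  have hfG : IntervalIntegrable (fun s => f s * ∫ u in a..s, g u) volume a b :=
    hf.mul_continuousOn hGc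
  have hsplit : (∫ s in a..b, f s * ((∫ u in a..b, g u) - ∫ u in a..s, g u))
      = (∫ s in a..b, f s) * (∫ u in a..b, g u) - ∫ s in a..b, (∫ u in a..s, g u) * f s := by
    have : (∫ s in a..b, f s * ((∫ u in a..b, g u) - ∫ u in a..s, g u))
        = ∫ s in a..b, (f s * (∫ u in a..b, g u) - f s * ∫ u in a..s, g u) := by
      congr 1; ext s; ring
    rw [this, intervalIntegral.integral_sub (hf.mul_const _) hfG,
      intervalIntegral.integral_mul_const]
    congr 1
    congr 1; ext s; ring
  rw [hsplit] at swap
  linarith [swap]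

lemma line_parts {a b : ℝ} (hab : a ≤ b) (U P f g : ℝ → ℝ)
    (hf : IntervalIntegrable f volume a b) (hg : IntervalIntegrable g volume a b)
    (hU : ∀ t ∈ Set.Icc a b, U t = U a + ∫ s in a..t, f s)
    (hP : ∀ t ∈ Set.Icc a b, P t = P a + ∫ s in a..t, g s) :
    (∫ t in a..b, U t * g t) + (∫ t in a..b, P t * f t) = U b * P b - U a * P a := by
  have huIcc : Set.uIcc a b = Set.Icc a b := Set.uIcc_of_le hab
  have hFc : ContinuousOn (fun s => ∫ u in a..s, f u) (Set.uIcc a b) :=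
    intervalIntegral.continuousOn_primitive_interval' hf Set.left_mem_uIcc
  have hGc : ContinuousOn (fun s => ∫ u in a..s, g u) (Set.uIcc a b) :=
    intervalIntegral.continuousOn_primitive_interval' hg Set.left_mem_uIcc
  have h1 : (∫ t in a..b, U t * g t)
      = U a * (∫ t in a..b, g t) + ∫ t in a..b, (∫ s in a..t, f s) * g t := by
    rw [← intervalIntegral.integral_const_mul,
      ← intervalIntegral.integral_add (hg.const_mul _) (hg.continuousOn_mul hFc)]
    apply intervalIntegral.integral_congr
    intro t ht
    rw [huIcc] at ht
    simp only []; rw [hU t ht]; ring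
  have h2 : (∫ t in a..b, P t * f t)
      = P a * (∫ t in a..b, f t) + ∫ t in a..b, (∫ s in a..t, g s) * f t := by
    rw [← intervalIntegral.integral_const_mul,
      ← intervalIntegral.integral_add (hf.const_mul _) (hf.continuousOn_mul hGc)]
    apply intervalIntegral.integral_congr
    intro t ht
    rw [huIcc] at ht
    simp only []; rw [hP t ht]; ring
  have hkey := primitive_parts hab f g hf hg
  have hUb := hU b ⟨hab, le_rfl⟩
  have hPb := hP b ⟨hab, le_rfl⟩
  rw [h1, h2, hUb, hPb]
  ring_nf
  ring_nf at hkey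
  linarith [hkey]

lemma sum_tele (N : ℕ) (hN : 1 ≤ N) (D : ℕ → ℕ → ℝ) :
    ∑ i ∈ Finset.Icc 1 N, (D i i - D i (i - 1))
      = -D 1 0 + (∑ i ∈ Finset.Icc 1 (N - 1), (D i i - D (i + 1) i)) + D N N := by
  induction N, hN using Nat.le_induction with
  | base => simp; ring
  | succ n hn ih =>
    rw [Finset.sum_Icc_succ_top (by omega : 1 ≤ n + 1), ih]
    have h1 : n + 1 - 1 = n := by omega
    rw [h1]
    obtain ⟨m, rfl⟩ : ∃ m, n = m + 1 := ⟨n - 1, by omega⟩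
    rw [show m + 1 - 1 = m from rfl]
    rw [Finset.sum_Icc_succ_top (by omega : 1 ≤ m + 1)]
    push_cast [show m + 1 + 1 - 1 = m + 1 from rfl]
    ring

lemma cross_cancel (N : ℕ) (hN : 1 ≤ N) (x : ℕ → ℝ)
    (hmono : ∀ i : ℕ, i < N → x i < x (i + 1))
    (V W Vd Wd : ℕ → ℕ → ℝ → ℝ → ℝ)
    (hVcont : ∀ i ∈ Finset.Icc 1 N, ∀ j ∈ Finset.Icc 1 N, ∀ t ∈ Set.Icc (x (i - 1)) (x i),
        ContinuousOn (fun s => V i j t s) (Set.Icc (x (j - 1)) (x j)))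
    (hWcont : ∀ i ∈ Finset.Icc 1 N, ∀ j ∈ Finset.Icc 1 N, ∀ t ∈ Set.Icc (x (i - 1)) (x i),
        ContinuousOn (fun s => W i j t s) (Set.Icc (x (j - 1)) (x j)))
    (hline : ∀ i ∈ Finset.Icc 1 N, ∀ j ∈ Finset.Icc 1 N, ∀ s ∈ Set.Icc (x (j - 1)) (x j),
        IntervalIntegrable (fun t => Vd i j t s) MeasureTheory.volume (x (i - 1)) (x i) ∧
        IntervalIntegrable (fun t => Wd i j t s) MeasureTheory.volume (x (i - 1)) (x i) ∧
        (∀ t ∈ Set.Icc (x (i - 1)) (x i),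
          V i j t s = V i j (x (i - 1)) s + ∫ u in x (i - 1)..t, Vd i j u s) ∧
        (∀ t ∈ Set.Icc (x (i - 1)) (x i),
          W i j t s = W i j (x (i - 1)) s + ∫ u in x (i - 1)..t, Wd i j u s))
    (houter : ∀ i ∈ Finset.Icc 1 N, ∀ j ∈ Finset.Icc 1 N,
        IntervalIntegrable (fun s => ∫ t in x (i - 1)..x i, V i j t s * Wd i j t s)
          MeasureTheory.volume (x (j - 1)) (x j) ∧
        IntervalIntegrable (fun s => ∫ t in x (i - 1)..x i, W i j t s * Vd i j t s)
          MeasureTheory.volume (x (j - 1)) (x j)) :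
    (∑ i ∈ Finset.Icc 1 N, ∑ j ∈ Finset.Icc 1 N,
        ∫ s in x (j - 1)..x j, ∫ t in x (i - 1)..x i, V i j t s * Wd i j t s)
    + (∑ i ∈ Finset.Icc 1 N, ∑ j ∈ Finset.Icc 1 N,
        ∫ s in x (j - 1)..x j, ∫ t in x (i - 1)..x i, W i j t s * Vd i j t s)
    = (∑ j ∈ Finset.Icc 1 N, ∑ i ∈ Finset.Icc 1 (N - 1),
        ∫ s in x (j - 1)..x j, V i j (x i) s * (W i j (x i) s - W (i + 1) j (x i) s))
    + (∑ j ∈ Finset.Icc 1 N,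
        ((∫ s in x (j - 1)..x j, W 1 j (x 0) s * (-V 1 j (x 0) s))
        + (∑ i ∈ Finset.Icc 1 (N - 1),
            ∫ s in x (j - 1)..x j, W (i + 1) j (x i) s * (V i j (x i) s - V (i + 1) j (x i) s))
        + ∫ s in x (j - 1)..x j, W N j (x N) s * V N j (x N) s)) := by
  -- basic mesh facts
  have hxstep : ∀ i ∈ Finset.Icc 1 N, x (i - 1) ≤ x i := by
    intro i hi
    simp only [Finset.mem_Icc] at hi
    obtain ⟨m, rfl⟩ : ∃ m, i = m + 1 := ⟨i - 1, by omega⟩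
    exact (hmono m (by omega)).le
  -- trace integrability helper
  have trace : ∀ i ∈ Finset.Icc 1 N, ∀ i' ∈ Finset.Icc 1 N, ∀ j ∈ Finset.Icc 1 N,
      ∀ t ∈ Set.Icc (x (i - 1)) (x i), ∀ t' ∈ Set.Icc (x (i' - 1)) (x i'),
      IntervalIntegrable (fun s => V i j t s * W i' j t' s)
        MeasureTheory.volume (x (j - 1)) (x j) := by
    intro i hi i' hi' j hj t ht t' ht'
    apply ContinuousOn.intervalIntegrable
    rw [Set.uIcc_of_le (hxstep j hj)]
    exact (hVcont i hi j hj t ht).mul (hWcont i' hi' j hj t' ht')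
  have endptL : ∀ i ∈ Finset.Icc 1 N, x (i - 1) ∈ Set.Icc (x (i - 1)) (x i) :=
    fun i hi => ⟨le_rfl, hxstep i hi⟩
  have endptR : ∀ i ∈ Finset.Icc 1 N, x i ∈ Set.Icc (x (i - 1)) (x i) :=
    fun i hi => ⟨hxstep i hi, le_rfl⟩
  -- per-cell integration by parts
  have hcell : ∀ i ∈ Finset.Icc 1 N, ∀ j ∈ Finset.Icc 1 N,
      (∫ s in x (j - 1)..x j, ∫ t in x (i - 1)..x i, V i j t s * Wd i j t s)
      + (∫ s in x (j - 1)..x j, ∫ t in x (i - 1)..x i, W i j t s * Vd i j t s)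
      = (∫ s in x (j - 1)..x j, V i j (x i) s * W i j (x i) s)
      - (∫ s in x (j - 1)..x j, V i j (x (i - 1)) s * W i j (x (i - 1)) s) := by
    intro i hi j hj
    rw [← intervalIntegral.integral_add (houter i hi j hj).1 (houter i hi j hj).2,
        ← intervalIntegral.integral_sub
          (trace i hi i hi j hj _ (endptR i hi) _ (endptR i hi))
          (trace i hi i hi j hj _ (endptL i hi) _ (endptL i hi))]
    apply intervalIntegral.integral_congr
    intro s hs
    rw [Set.uIcc_of_le (hxstep j hj)] at hs
    simp only []
    obtain ⟨hVd, hWd, hVrep, hWrep⟩ := hline i hi j hj s hs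
    exact line_parts (hxstep i hi) (fun t => V i j t s) (fun t => W i j t s)
      (fun t => Vd i j t s) (fun t => Wd i j t s) hVd hWd hVrep hWrep
  -- LHS as a telescoping sum
  have hL : (∑ i ∈ Finset.Icc 1 N, ∑ j ∈ Finset.Icc 1 N,
        ∫ s in x (j - 1)..x j, ∫ t in x (i - 1)..x i, V i j t s * Wd i j t s)
      + (∑ i ∈ Finset.Icc 1 N, ∑ j ∈ Finset.Icc 1 N,
        ∫ s in x (j - 1)..x j, ∫ t in x (i - 1)..x i, W i j t s * Vd i j t s)
      = ∑ j ∈ Finset.Icc 1 N, ∑ i ∈ Finset.Icc 1 N,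
          ((∫ s in x (j - 1)..x j, V i j (x i) s * W i j (x i) s)
          - (∫ s in x (j - 1)..x j, V i j (x (i - 1)) s * W i j (x (i - 1)) s)) := by
    have h1 : ∀ i ∈ Finset.Icc 1 N,
        (∑ j ∈ Finset.Icc 1 N,
          ∫ s in x (j - 1)..x j, ∫ t in x (i - 1)..x i, V i j t s * Wd i j t s)
        + (∑ j ∈ Finset.Icc 1 N,
          ∫ s in x (j - 1)..x j, ∫ t in x (i - 1)..x i, W i j t s * Vd i j t s)
        = ∑ j ∈ Finset.Icc 1 N,
          ((∫ s in x (j - 1)..x j, V i j (x i) s * W i j (x i) s)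
          - (∫ s in x (j - 1)..x j, V i j (x (i - 1)) s * W i j (x (i - 1)) s)) := by
      intro i hi
      rw [← Finset.sum_add_distrib]
      exact Finset.sum_congr rfl fun j hj => hcell i hi j hj
    rw [← Finset.sum_add_distrib, Finset.sum_congr rfl h1, Finset.sum_comm]
  rw [hL]
  -- now per j, telescope
  rw [← Finset.sum_add_distrib]
  apply Finset.sum_congr rfl
  intro j hj
  rw [sum_tele N hN
    (fun i m => ∫ s in x (j - 1)..x j, V i j (x m) s * W i j (x m) s)]
  -- identify the three RHS pieces
  have e1 : (∫ s in x (j - 1)..x j, W 1 j (x 0) s * (-V 1 j (x 0) s))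
      = -(∫ s in x (j - 1)..x j, V 1 j (x 0) s * W 1 j (x 0) s) := by
    rw [← intervalIntegral.integral_neg]
    apply intervalIntegral.integral_congr
    intro s _
    simp only []
    ring
  have e2 : (∫ s in x (j - 1)..x j, W N j (x N) s * V N j (x N) s)
      = ∫ s in x (j - 1)..x j, V N j (x N) s * W N j (x N) s := by
    apply intervalIntegral.integral_congr
    intro s _
    simp only []
    ring
  have e3 : ∀ i ∈ Finset.Icc 1 (N - 1),
      (∫ s in x (j - 1)..x j, V i j (x i) s * (W i j (x i) s - W (i + 1) j (x i) s))
      + (∫ s in x (j - 1)..x j, W (i + 1) j (x i) s * (V i j (x i) s - V (i + 1) j (x i) s))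
      = (∫ s in x (j - 1)..x j, V i j (x i) s * W i j (x i) s)
      - (∫ s in x (j - 1)..x j, V (i + 1) j (x i) s * W (i + 1) j (x i) s) := by
    intro i hi
    simp only [Finset.mem_Icc] at hi
    have hiN : i ∈ Finset.Icc 1 N := by simp only [Finset.mem_Icc]; omega
    have hi1N : i + 1 ∈ Finset.Icc 1 N := by simp only [Finset.mem_Icc]; omega
    have hxi : x i ∈ Set.Icc (x (i + 1 - 1)) (x (i + 1)) := by
      rw [show i + 1 - 1 = i from rfl]
      exact ⟨le_rfl, hxstep (i + 1) hi1N⟩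
    have cVi := hVcont i hiN j hj _ (endptR i hiN)
    have cVi1 := hVcont (i + 1) hi1N j hj _ hxi
    have cWi := hWcont i hiN j hj _ (endptR i hiN)
    have cWi1 := hWcont (i + 1) hi1N j hj _ hxi
    have hA : IntervalIntegrable
        (fun s => V i j (x i) s * (W i j (x i) s - W (i + 1) j (x i) s))
        MeasureTheory.volume (x (j - 1)) (x j) := by
      apply ContinuousOn.intervalIntegrable
      rw [Set.uIcc_of_le (hxstep j hj)]
      exact cVi.mul (cWi.sub cWi1)
    have hB : IntervalIntegrable
        (fun s => W (i + 1) j (x i) s * (V i j (x i) s - V (i + 1) j (x i) s))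
        MeasureTheory.volume (x (j - 1)) (x j) := by
      apply ContinuousOn.intervalIntegrable
      rw [Set.uIcc_of_le (hxstep j hj)]
      exact cWi1.mul (cVi.sub cVi1)
    have t1 := trace i hiN i hiN j hj _ (endptR i hiN) _ (endptR i hiN)
    have t2 := trace (i + 1) hi1N (i + 1) hi1N j hj _ hxi _ hxi
    rw [← intervalIntegral.integral_add hA hB, ← intervalIntegral.integral_sub t1 t2]
    apply intervalIntegral.integral_congr
    intro s _
    simp only []
    ring
  have hs2 : (∑ i ∈ Finset.Icc 1 (N - 1),
      ∫ s in x (j - 1)..x j, V i j (x i) s * (W i j (x i) s - W (i + 1) j (x i) s))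
      + (∑ i ∈ Finset.Icc 1 (N - 1),
      ∫ s in x (j - 1)..x j, W (i + 1) j (x i) s * (V i j (x i) s - V (i + 1) j (x i) s))
      = ∑ i ∈ Finset.Icc 1 (N - 1),
      ((∫ s in x (j - 1)..x j, V i j (x i) s * W i j (x i) s)
      - (∫ s in x (j - 1)..x j, V (i + 1) j (x i) s * W (i + 1) j (x i) s)) := by
    rw [← Finset.sum_add_distrib]
    exact Finset.sum_congr rfl e3
  simp only [] at *
  rw [e1, e2]
  linarith [hs2]

lemma slice_cont_fst {f : ℝ → ℝ → ℝ} {A B : Set ℝ}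
    (h : ContinuousOn (Function.uncurry f) (A ×ˢ B)) {t : ℝ} (ht : t ∈ A) :
    ContinuousOn (fun s => f t s) B := by
  have : (fun s => f t s) = (Function.uncurry f) ∘ (fun s => (t, s)) := rfl
  rw [this]
  exact h.comp (Continuous.continuousOn (by continuity)) fun s hs => Set.mk_mem_prod ht hs

lemma slice_cont_snd {f : ℝ → ℝ → ℝ} {A B : Set ℝ}
    (h : ContinuousOn (Function.uncurry f) (A ×ˢ B)) {t : ℝ} (ht : t ∈ B) :
    ContinuousOn (fun s => f s t) A := by
  have : (fun s => f s t) = (Function.uncurry f) ∘ (fun s => (s, t)) := rfl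
  rw [this]
  exact h.comp (Continuous.continuousOn (by continuity)) fun s hs => Set.mk_mem_prod hs ht

theorem ldg_energy_identity_2d
    (k N : ℕ) (ε β : ℝ)
    (hk : 1 ≤ k) (hN : 4 ≤ N) (hN4 : 4 ∣ N)
    (hε : 0 < ε) (hε1 : ε ≤ 1) (hβ : 0 < β)
    (b : ℝ → ℝ → ℝ)
    (hb : ContDiffOn ℝ (⊤ : ℕ∞) (Function.uncurry b) (Set.Icc 0 1 ×ˢ Set.Icc 0 1))
    (hbβ : ∀ a ∈ Set.Icc (0 : ℝ) 1, ∀ c ∈ Set.Icc (0 : ℝ) 1, 2 * β ^ 2 ≤ b a c)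
    (x : ℕ → ℝ) (hx0 : x 0 = 0) (hxN : x N = 1)
    (hmono : ∀ i : ℕ, i < N → x i < x (i + 1))
    (Uc Pc Qc Udx Udy Pdx Qdy : ℕ → ℕ → ℝ → ℝ → ℝ)
    -- continuity of the cell restrictions on the closed cells
    (hcont : ∀ i ∈ Finset.Icc 1 N, ∀ j ∈ Finset.Icc 1 N,
      ContinuousOn (Function.uncurry (Uc i j))
        (Set.Icc (x (i - 1)) (x i) ×ˢ Set.Icc (x (j - 1)) (x j)) ∧
      ContinuousOn (Function.uncurry (Pc i j))
        (Set.Icc (x (i - 1)) (x i) ×ˢ Set.Icc (x (j - 1)) (x j)) ∧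
      ContinuousOn (Function.uncurry (Qc i j))
        (Set.Icc (x (i - 1)) (x i) ×ˢ Set.Icc (x (j - 1)) (x j)))
    -- H¹ in the x-direction for U and P (per horizontal line)
    (hxdir : ∀ i ∈ Finset.Icc 1 N, ∀ j ∈ Finset.Icc 1 N,
      ∀ c ∈ Set.Icc (x (j - 1)) (x j),
        IntervalIntegrable (fun a => Udx i j a c)
          MeasureTheory.volume (x (i - 1)) (x i) ∧
        IntervalIntegrable (fun a => (Udx i j a c) ^ 2)
          MeasureTheory.volume (x (i - 1)) (x i) ∧
        IntervalIntegrable (fun a => Pdx i j a c)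
          MeasureTheory.volume (x (i - 1)) (x i) ∧
        IntervalIntegrable (fun a => (Pdx i j a c) ^ 2)
          MeasureTheory.volume (x (i - 1)) (x i) ∧
        (∀ a ∈ Set.Icc (x (i - 1)) (x i),
          Uc i j a c = Uc i j (x (i - 1)) c + ∫ s in x (i - 1)..a, Udx i j s c) ∧
        (∀ a ∈ Set.Icc (x (i - 1)) (x i),
          Pc i j a c = Pc i j (x (i - 1)) c + ∫ s in x (i - 1)..a, Pdx i j s c))
    -- H¹ in the y-direction for U and Q (per vertical line)
    (hydir : ∀ i ∈ Finset.Icc 1 N, ∀ j ∈ Finset.Icc 1 N,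
      ∀ a ∈ Set.Icc (x (i - 1)) (x i),
        IntervalIntegrable (fun c => Udy i j a c)
          MeasureTheory.volume (x (j - 1)) (x j) ∧
        IntervalIntegrable (fun c => (Udy i j a c) ^ 2)
          MeasureTheory.volume (x (j - 1)) (x j) ∧
        IntervalIntegrable (fun c => Qdy i j a c)
          MeasureTheory.volume (x (j - 1)) (x j) ∧
        IntervalIntegrable (fun c => (Qdy i j a c) ^ 2)
          MeasureTheory.volume (x (j - 1)) (x j) ∧
        (∀ c ∈ Set.Icc (x (j - 1)) (x j),
          Uc i j a c = Uc i j a (x (j - 1)) + ∫ s in x (j - 1)..c, Udy i j a s) ∧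
        (∀ c ∈ Set.Icc (x (j - 1)) (x j),
          Qc i j a c = Qc i j a (x (j - 1)) + ∫ s in x (j - 1)..c, Qdy i j a s))
    -- integrability of the inner integrals of the cross terms
    (houter : ∀ i ∈ Finset.Icc 1 N, ∀ j ∈ Finset.Icc 1 N,
      IntervalIntegrable
        (fun c => ∫ a in x (i - 1)..x i, Uc i j a c * Pdx i j a c)
        MeasureTheory.volume (x (j - 1)) (x j) ∧
      IntervalIntegrable
        (fun c => ∫ a in x (i - 1)..x i, Pc i j a c * Udx i j a c)
        MeasureTheory.volume (x (j - 1)) (x j) ∧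
      IntervalIntegrable
        (fun a => ∫ c in x (j - 1)..x j, Uc i j a c * Qdy i j a c)
        MeasureTheory.volume (x (i - 1)) (x i) ∧
      IntervalIntegrable
        (fun a => ∫ c in x (j - 1)..x j, Qc i j a c * Udy i j a c)
        MeasureTheory.volume (x (i - 1)) (x i)) :
    -- B(T;T) :
    (∑ i ∈ Finset.Icc 1 N, ∑ j ∈ Finset.Icc 1 N,
        ∫ a in x (i - 1)..x i, ∫ c in x (j - 1)..x j,
          b a c * Uc i j a c * Uc i j a c) +
    ε⁻¹ * (∑ i ∈ Finset.Icc 1 N, ∑ j ∈ Finset.Icc 1 N,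
        ∫ a in x (i - 1)..x i, ∫ c in x (j - 1)..x j,
          Pc i j a c * Pc i j a c) +
    ε⁻¹ * (∑ i ∈ Finset.Icc 1 N, ∑ j ∈ Finset.Icc 1 N,
        ∫ a in x (i - 1)..x i, ∫ c in x (j - 1)..x j,
          Qc i j a c * Qc i j a c) +
    -- (U, s_x) with s = P
    (∑ i ∈ Finset.Icc 1 N, ∑ j ∈ Finset.Icc 1 N,
        ∫ c in x (j - 1)..x j, ∫ a in x (i - 1)..x i,
          Uc i j a c * Pdx i j a c) -
    (∑ j ∈ Finset.Icc 1 N, ∑ i ∈ Finset.Icc 1 (N - 1),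
        ∫ c in x (j - 1)..x j,
          Uc i j (x i) c * (Pc i j (x i) c - Pc (i + 1) j (x i) c)) +
    -- (U, r_y) with r = Q
    (∑ i ∈ Finset.Icc 1 N, ∑ j ∈ Finset.Icc 1 N,
        ∫ a in x (i - 1)..x i, ∫ c in x (j - 1)..x j,
          Uc i j a c * Qdy i j a c) -
    (∑ i ∈ Finset.Icc 1 N, ∑ j ∈ Finset.Icc 1 (N - 1),
        ∫ a in x (i - 1)..x i,
          Uc i j a (x j) * (Qc i j a (x j) - Qc i (j + 1) a (x j))) +
    -- (P, v_x) with v = U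
    (∑ i ∈ Finset.Icc 1 N, ∑ j ∈ Finset.Icc 1 N,
        ∫ c in x (j - 1)..x j, ∫ a in x (i - 1)..x i,
          Pc i j a c * Udx i j a c) -
    (∑ j ∈ Finset.Icc 1 N,
        ((∫ c in x (j - 1)..x j, Pc 1 j (x 0) c * (-Uc 1 j (x 0) c)) +
          (∑ i ∈ Finset.Icc 1 (N - 1),
            ∫ c in x (j - 1)..x j,
              Pc (i + 1) j (x i) c *
                (Uc i j (x i) c - Uc (i + 1) j (x i) c)) +
          ∫ c in x (j - 1)..x j, Pc N j (x N) c * Uc N j (x N) c)) +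
    -- (Q, v_y) with v = U
    (∑ i ∈ Finset.Icc 1 N, ∑ j ∈ Finset.Icc 1 N,
        ∫ a in x (i - 1)..x i, ∫ c in x (j - 1)..x j,
          Qc i j a c * Udy i j a c) -
    (∑ i ∈ Finset.Icc 1 N,
        ((∫ a in x (i - 1)..x i, Qc i 1 a (x 0) * (-Uc i 1 a (x 0))) +
          (∑ j ∈ Finset.Icc 1 (N - 1),
            ∫ a in x (i - 1)..x i,
              Qc i (j + 1) a (x j) *
                (Uc i j a (x j) - Uc i (j + 1) a (x j))) +
          ∫ a in x (i - 1)..x i, Qc i N a (x N) * Uc i N a (x N))) +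
    -- penalty terms
    (∑ j ∈ Finset.Icc 1 N,
        ((∫ c in x (j - 1)..x j, Real.sqrt ε * (-Uc 1 j (x 0) c) * (-Uc 1 j (x 0) c)) +
          ∫ c in x (j - 1)..x j, Real.sqrt ε * Uc N j (x N) c * Uc N j (x N) c)) +
    (∑ i ∈ Finset.Icc 1 N,
        ((∫ a in x (i - 1)..x i, Real.sqrt ε * (-Uc i 1 a (x 0)) * (-Uc i 1 a (x 0))) +
          ∫ a in x (i - 1)..x i, Real.sqrt ε * Uc i N a (x N) * Uc i N a (x N))) +
    (∑ j ∈ Finset.Icc 1 N,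
        ∫ c in x (j - 1)..x j, (Real.sqrt ε)⁻¹ *
          (Pc (3 * N / 4) j (x (3 * N / 4)) c -
            Pc (3 * N / 4 + 1) j (x (3 * N / 4)) c) *
          (Pc (3 * N / 4) j (x (3 * N / 4)) c -
            Pc (3 * N / 4 + 1) j (x (3 * N / 4)) c)) +
    (∑ i ∈ Finset.Icc 1 N,
        ∫ a in x (i - 1)..x i, (Real.sqrt ε)⁻¹ *
          (Qc i (3 * N / 4) a (x (3 * N / 4)) -
            Qc i (3 * N / 4 + 1) a (x (3 * N / 4))) *
          (Qc i (3 * N / 4) a (x (3 * N / 4)) -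
            Qc i (3 * N / 4 + 1) a (x (3 * N / 4))))
    =
    -- |||T|||_E² :
    ε⁻¹ * (∑ i ∈ Finset.Icc 1 N, ∑ j ∈ Finset.Icc 1 N,
        ∫ a in x (i - 1)..x i, ∫ c in x (j - 1)..x j,
          Pc i j a c * Pc i j a c) +
    ε⁻¹ * (∑ i ∈ Finset.Icc 1 N, ∑ j ∈ Finset.Icc 1 N,
        ∫ a in x (i - 1)..x i, ∫ c in x (j - 1)..x j,
          Qc i j a c * Qc i j a c) +
    (∑ i ∈ Finset.Icc 1 N, ∑ j ∈ Finset.Icc 1 N,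
        ∫ a in x (i - 1)..x i, ∫ c in x (j - 1)..x j,
          b a c * Uc i j a c * Uc i j a c) +
    (∑ j ∈ Finset.Icc 1 N,
        ((∫ c in x (j - 1)..x j, Real.sqrt ε * (-Uc 1 j (x 0) c) ^ 2) +
          ∫ c in x (j - 1)..x j, Real.sqrt ε * (Uc N j (x N) c) ^ 2)) +
    (∑ i ∈ Finset.Icc 1 N,
        ((∫ a in x (i - 1)..x i, Real.sqrt ε * (-Uc i 1 a (x 0)) ^ 2) +
          ∫ a in x (i - 1)..x i, Real.sqrt ε * (Uc i N a (x N)) ^ 2)) +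
    (∑ j ∈ Finset.Icc 1 N,
        ∫ c in x (j - 1)..x j, (Real.sqrt ε)⁻¹ *
          (Pc (3 * N / 4) j (x (3 * N / 4)) c -
            Pc (3 * N / 4 + 1) j (x (3 * N / 4)) c) ^ 2) +
    (∑ i ∈ Finset.Icc 1 N,
        ∫ a in x (i - 1)..x i, (Real.sqrt ε)⁻¹ *
          (Qc i (3 * N / 4) a (x (3 * N / 4)) -
            Qc i (3 * N / 4 + 1) a (x (3 * N / 4))) ^ 2) := by
  have hN1 : 1 ≤ N := by omega
  -- x-direction cancellation
  have KX := cross_cancel N hN1 x hmono Uc Pc Udx Pdx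
    (fun i hi j hj t ht => slice_cont_fst (hcont i hi j hj).1 ht)
    (fun i hi j hj t ht => slice_cont_fst (hcont i hi j hj).2.1 ht)
    (fun i hi j hj s hs => by
      obtain ⟨h1, h2, h3, h4, h5, h6⟩ := hxdir i hi j hj s hs
      exact ⟨h1, h3, h5, h6⟩)
    (fun i hi j hj => ⟨(houter i hi j hj).1, (houter i hi j hj).2.1⟩)
  -- y-direction cancellation
  have KY := cross_cancel N hN1 x hmono
    (fun i j t s => Uc j i s t) (fun i j t s => Qc j i s t)
    (fun i j t s => Udy j i s t) (fun i j t s => Qdy j i s t)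
    (fun i hi j hj t ht => slice_cont_snd (hcont j hj i hi).1 ht)
    (fun i hi j hj t ht => slice_cont_snd (hcont j hj i hi).2.2 ht)
    (fun i hi j hj s hs => by
      obtain ⟨h1, h2, h3, h4, h5, h6⟩ := hydir j hj i hi s hs
      exact ⟨h1, h3, h5, h6⟩)
    (fun i hi j hj => ⟨(houter j hj i hi).2.2.1, (houter j hj i hi).2.2.2⟩)
  have c1 : (∑ i ∈ Finset.Icc 1 N, ∑ j ∈ Finset.Icc 1 N,
        ∫ s in x (j - 1)..x j, ∫ t in x (i - 1)..x i, Uc j i s t * Qdy j i s t)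
      = ∑ i ∈ Finset.Icc 1 N, ∑ j ∈ Finset.Icc 1 N,
        ∫ a in x (i - 1)..x i, ∫ c in x (j - 1)..x j, Uc i j a c * Qdy i j a c :=
    Finset.sum_comm
  have c2 : (∑ i ∈ Finset.Icc 1 N, ∑ j ∈ Finset.Icc 1 N,
        ∫ s in x (j - 1)..x j, ∫ t in x (i - 1)..x i, Qc j i s t * Udy j i s t)
      = ∑ i ∈ Finset.Icc 1 N, ∑ j ∈ Finset.Icc 1 N,
        ∫ a in x (i - 1)..x i, ∫ c in x (j - 1)..x j, Qc i j a c * Udy i j a c :=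
    Finset.sum_comm
  rw [c1, c2] at KY
  -- penalty rewrites
  have p1 : (∑ j ∈ Finset.Icc 1 N,
      ((∫ c in x (j - 1)..x j, Real.sqrt ε * (-Uc 1 j (x 0) c) * (-Uc 1 j (x 0) c)) +
        ∫ c in x (j - 1)..x j, Real.sqrt ε * Uc N j (x N) c * Uc N j (x N) c))
      = ∑ j ∈ Finset.Icc 1 N,
      ((∫ c in x (j - 1)..x j, Real.sqrt ε * (-Uc 1 j (x 0) c) ^ 2) +
        ∫ c in x (j - 1)..x j, Real.sqrt ε * (Uc N j (x N) c) ^ 2) := by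
    refine Finset.sum_congr rfl fun j _ => ?_
    congr 1 <;>
      · refine intervalIntegral.integral_congr fun s _ => ?_
        skip
        ring
  have p2 : (∑ i ∈ Finset.Icc 1 N,
      ((∫ a in x (i - 1)..x i, Real.sqrt ε * (-Uc i 1 a (x 0)) * (-Uc i 1 a (x 0))) +
        ∫ a in x (i - 1)..x i, Real.sqrt ε * Uc i N a (x N) * Uc i N a (x N)))
      = ∑ i ∈ Finset.Icc 1 N,
      ((∫ a in x (i - 1)..x i, Real.sqrt ε * (-Uc i 1 a (x 0)) ^ 2) +
        ∫ a in x (i - 1)..x i, Real.sqrt ε * (Uc i N a (x N)) ^ 2) := by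
    refine Finset.sum_congr rfl fun i _ => ?_
    congr 1 <;>
      · refine intervalIntegral.integral_congr fun s _ => ?_
        skip
        ring
  have p3 : (∑ j ∈ Finset.Icc 1 N,
      ∫ c in x (j - 1)..x j, (Real.sqrt ε)⁻¹ *
        (Pc (3 * N / 4) j (x (3 * N / 4)) c - Pc (3 * N / 4 + 1) j (x (3 * N / 4)) c) *
        (Pc (3 * N / 4) j (x (3 * N / 4)) c - Pc (3 * N / 4 + 1) j (x (3 * N / 4)) c))
      = ∑ j ∈ Finset.Icc 1 N,
      ∫ c in x (j - 1)..x j, (Real.sqrt ε)⁻¹ *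
        (Pc (3 * N / 4) j (x (3 * N / 4)) c - Pc (3 * N / 4 + 1) j (x (3 * N / 4)) c) ^ 2 := by
    refine Finset.sum_congr rfl fun j _ => ?_
    refine intervalIntegral.integral_congr fun s _ => ?_
    skip
    ring
  have p4 : (∑ i ∈ Finset.Icc 1 N,
      ∫ a in x (i - 1)..x i, (Real.sqrt ε)⁻¹ *
        (Qc i (3 * N / 4) a (x (3 * N / 4)) - Qc i (3 * N / 4 + 1) a (x (3 * N / 4))) *
        (Qc i (3 * N / 4) a (x (3 * N / 4)) - Qc i (3 * N / 4 + 1) a (x (3 * N / 4))))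
      = ∑ i ∈ Finset.Icc 1 N,
      ∫ a in x (i - 1)..x i, (Real.sqrt ε)⁻¹ *
        (Qc i (3 * N / 4) a (x (3 * N / 4)) - Qc i (3 * N / 4 + 1) a (x (3 * N / 4))) ^ 2 := by
    refine Finset.sum_congr rfl fun i _ => ?_
    refine intervalIntegral.integral_congr fun s _ => ?_
    skip
    ring
  rw [p1, p2, p3, p4]
  linarith [KX, KY]
end
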